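/- arXiv:2603.05300 — 6 statements merged into one kernel-verified Lean document; each statement's English description precedes it below -/
import Mathlib

section
/- For integers k ≥ 1, u ∈ ℤ, and non-negative integers s₁ ≥ s₂ ≥ ⋯ ≥ s_k ≥ 0 (with s_{k+1} := 0), the u-frame sequence, i.e. the generalised frequency sequence consisting of s_k consecutive pairs (k,0) starting at index u, followed by s_{k-1}-s_k pairs (k-1,0), ..., followed by s₁-s₂ pairs (1,0), and zeros elsewhere, has weight s₁² + ⋯ + s_k² + (u-1)(s₁ + ⋯ + s_k). -/
/-! The value of `frameSeq k s u` at `i` is the number of `m ∈ [1, k]` whose frame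
`{u, u + 2, …, u + 2 (s m - 1)}` contains `i`. Exchanging the two summations, the weight is
`∑ m, ∑ (i in the m-th frame) i`, and an arithmetic progression of length `n` with first term `u`
and difference `2` sums to `n² + (u - 1) n`. -/

/-- The `u`-frame sequence associated with `s₁ ≥ ⋯ ≥ s_k ≥ 0`: at the position
`i = u + 2t` (for `t ≥ 0`) the value is the number of `m ∈ {1,…,k}` with `t < s m`
(this places `s_k` pairs `(k,0)` first, then `s_{k-1} - s_k` pairs `(k-1,0)`, …,
then `s₁ - s₂` pairs `(1,0)`), and `0` elsewhere. -/
noncomputable def frameSeq (k : ℕ) (s : ℕ → ℕ) (u : ℤ) : ℤ → ℕ := fun i =>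
  if 0 ≤ i - u ∧ (i - u) % 2 = 0 then
    ((Finset.Icc 1 k).filter fun m => (i - u)/2 < (s m : ℤ)).card
  else 0

open Finset

def frame (u : ℤ) (n : ℕ) : Finset ℤ :=
  (range n).image fun t : ℕ => u + 2 * (t : ℤ)

theorem mem_frame {u i : ℤ} {n : ℕ} :
    i ∈ frame u n ↔ 0 ≤ i - u ∧ (i - u) % 2 = 0 ∧ (i - u) / 2 < n := by
  simp only [frame, mem_image, mem_range]
  constructor
  · rintro ⟨t, ht, rfl⟩
    omega
  · rintro ⟨h0, heven, hlt⟩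
    exact ⟨((i - u) / 2).toNat, by omega, by omega⟩

theorem sum_frame (u : ℤ) (n : ℕ) : ∑ i ∈ frame u n, i = n ^ 2 + (u - 1) * n := by
  rw [frame, sum_image fun a _ b _ h => by simpa using h]
  induction n with
  | zero => simp
  | succ n ih =>
    rw [sum_range_succ, ih]
    push_cast
    ring

theorem frameSeq_eq_card (k : ℕ) (s : ℕ → ℕ) (u i : ℤ) :
    frameSeq k s u i = #{m ∈ Icc 1 k | i ∈ frame u (s m)} := by
  simp only [frameSeq, mem_frame]
  split_ifs with h
  · simp only [h, true_and]
  · rw [eq_comm, card_eq_zero, filter_eq_empty_iff]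
    exact fun m _ hm => h ⟨hm.1, hm.2.1⟩

theorem weight_frameSeq (k : ℕ) (s : ℕ → ℕ) (u : ℤ) :
    ∑ᶠ i : ℤ, i * (frameSeq k s u i : ℤ)
      = ∑ m ∈ Icc 1 k, ((s m : ℤ) ^ 2 + (u - 1) * s m) := by
  have hsplit (i : ℤ) : i * (frameSeq k s u i : ℤ)
      = ∑ m ∈ Icc 1 k, Set.indicator (frame u (s m) : Set ℤ) id i := by
    rw [frameSeq_eq_card, card_filter, Nat.cast_sum, mul_sum]
    refine sum_congr rfl fun m _ => ?_
    by_cases hi : i ∈ frame u (s m) <;> simp [hi]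
  simp_rw [hsplit]
  rw [finsum_sum_comm _ _ fun m _ =>
    (frame u (s m)).finite_toSet.subset Set.support_indicator_subset]
  refine sum_congr rfl fun m _ => ?_
  rw [← finsum_mem_def, finsum_mem_coe_finset, ← sum_frame]
  rfl

theorem stmt1_general (k : ℕ) (u : ℤ) (s : ℕ → ℕ) :
    ∑ᶠ i : ℤ, i * (frameSeq k s u i : ℤ)
      = ∑ m ∈ Finset.Icc 1 k, ((s m : ℤ))^2
        + (u - 1) * ∑ m ∈ Finset.Icc 1 k, (s m : ℤ) := by
  rw [weight_frameSeq, sum_add_distrib, mul_sum]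

/-- The `u`-frame sequence has weight `s₁² + ⋯ + s_k² + (u-1)(s₁ + ⋯ + s_k)`. -/
theorem stmt1 (k : ℕ) (hk : 1 ≤ k) (u : ℤ) (s : ℕ → ℕ)
    (hdec : ∀ m, 1 ≤ m → m ≤ k → s (m+1) ≤ s m) (hsk : s (k+1) = 0) :
    ∑ᶠ i : ℤ, i * (frameSeq k s u i : ℤ)
      = ∑ m ∈ Finset.Icc 1 k, ((s m : ℤ))^2
        + (u - 1) * ∑ m ∈ Finset.Icc 1 k, (s m : ℤ) :=
  stmt1_general k u s
end

section
/- Let f = (f_i)_{i∈ℤ} be a generalised frequency sequence, u an integer, and h ≥ 1 with (f_u, f_{u+1}) = (h, 0) and f_i + f_{i+1} ≤ h for all i ≥ u. Let m ≥ 0 and set v := min{ t ≥ u : Σ_{i=u+2}^{t+2} (h - (f_{i-1} + f_i)) ≥ m }. Then the sequence f̄ obtained from f by applying m particle motions starting at index u satisfies: f̄_i = f_i for i < u; f̄_i = f_{i+2} for u ≤ i < v; f̄_v = f_{v+2} + Σ_{j=u+2}^{v+2}(h - (f_{j-1}+f_j)) - m; f̄_{v+1} = f_{v+1} + m - Σ_{j=u+2}^{v+1}(h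 - (f_{j-1}+f_j)); and f̄_i = f_i for i ≥ v+2. -/
/-!
Write `slack f h i := h - (f (i-1) + f i)` for the room left below `h` by the pair ending at `i`.
While the focused pair sums to `h`, the next step is a focus shift exactly when the slack of the
following pair is zero, and a particle motion lowers that slack by one. Hence `m` motions use up
the first `m` units of slack to the right of `u + 1`: the focus stops at the first `v` where the
accumulated slack reaches `m`, every pair skipped on the way has moved two places to the left,
and the leftover slack stays in the pair `(v, v + 1)`. The proof is an induction on the
process, with `h` fixed and the stopping index `v` recomputed from the current sequence.
-/

/-- The particle-motion process: `PPM (f, u) m (g, v)` means that starting from the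
generalised frequency sequence `f` with focus at index `u`, after exactly `m` particle
motions (interleaved with the forced focus shifts) the process stops at the sequence `g`
with focus at index `v`.  With `h := f_w + f_{w+1}` the invariant sum of the focused pair:
if `f_{w+1} + f_{w+2} = h` the focus shifts to `w+1` (no motion); if `f_{w+1} + f_{w+2} < h`
the pair `(f_w, f_{w+1})` becomes `(f_w - 1, f_{w+1} + 1)` (one motion).  The process stops
immediately after the `m`-th motion (or at once if `m = 0`). -/
inductive PPM : ((ℤ → ℕ) × ℤ) → ℕ → ((ℤ → ℕ) × ℤ) → Prop
  | zero (f : ℤ → ℕ) (w : ℤ) : PPM (f, w) 0 (f, w)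
  | shift {f : ℤ → ℕ} {w : ℤ} {m : ℕ} {t : (ℤ → ℕ) × ℤ} (hm : 0 < m)
      (hcond : f (w+1) + f (w+2) = f w + f (w+1))
      (h : PPM (f, w+1) m t) : PPM (f, w) m t
  | motion {f : ℤ → ℕ} {w : ℤ} {m : ℕ} {t : (ℤ → ℕ) × ℤ}
      (hcond : f (w+1) + f (w+2) < f w + f (w+1))
      (h : PPM (Function.update (Function.update f w (f w - 1)) (w+1) (f (w+1) + 1), w) m t) :
      PPM (f, w) (m+1) t

open Finset

def slack (f : ℤ → ℕ) (h : ℕ) (i : ℤ) : ℕ := h - (f (i - 1) + f i)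

def stopSet (f : ℤ → ℕ) (h : ℕ) (u : ℤ) (m : ℕ) : Set ℤ :=
  {t | u ≤ t ∧ m ≤ ∑ i ∈ Icc (u + 2) (t + 2), slack f h i}

def moveParticle (f : ℤ → ℕ) (w : ℤ) : ℤ → ℕ :=
  Function.update (Function.update f w (f w - 1)) (w + 1) (f (w + 1) + 1)

def IsMotionResult (f : ℤ → ℕ) (h : ℕ) (u : ℤ) (m : ℕ) (v : ℤ) (g : ℤ → ℕ) : Prop :=
  (∀ i, i < u → g i = f i) ∧
  (∀ i, u ≤ i → i < v → g i = f (i + 2)) ∧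
  g v = f (v + 2) + ((∑ j ∈ Icc (u + 2) (v + 2), slack f h j) - m) ∧
  g (v + 1) = f (v + 1) + (m - ∑ j ∈ Icc (u + 2) (v + 1), slack f h j) ∧
  ∀ i, v + 2 ≤ i → g i = f i

lemma sum_Icc_eq_sum_Icc_add_one {M : Type*} [AddCommMonoid M] {F : ℤ → M} {a : ℤ}
    (ha : F a = 0) (b : ℤ) : ∑ i ∈ Icc a b, F i = ∑ i ∈ Icc (a + 1) b, F i := by
  rcases lt_or_ge b a with hb | hb
  · rw [Icc_eq_empty_of_lt hb, Icc_eq_empty_of_lt (by omega)]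
  · rw [← add_sum_Ioc_eq_sum_Icc hb, ha, zero_add, Icc_add_one_left_eq_Ioc]

section moveParticle

variable {f : ℤ → ℕ} {w : ℤ}

lemma moveParticle_apply_self : moveParticle f w w = f w - 1 := by
  simp [moveParticle]

lemma moveParticle_apply_add_one : moveParticle f w (w + 1) = f (w + 1) + 1 := by
  simp [moveParticle]

lemma moveParticle_apply_of_ne {i : ℤ} (h₀ : i ≠ w) (h₁ : i ≠ w + 1) :
    moveParticle f w i = f i := by
  simp [moveParticle, h₀, h₁]

lemma slack_moveParticle_of_add_three_le {h : ℕ} {i : ℤ} (hi : w + 3 ≤ i) :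
    slack (moveParticle f w) h i = slack f h i := by
  have h₀ : moveParticle f w i = f i := moveParticle_apply_of_ne (by omega) (by omega)
  have h₁ : moveParticle f w (i - 1) = f (i - 1) := moveParticle_apply_of_ne (by omega) (by omega)
  rw [slack, slack, h₀, h₁]

lemma sum_slack_moveParticle {h : ℕ} (hpos : 0 < slack f h (w + 2)) {b : ℤ} (hb : w + 2 ≤ b) :
    ∑ i ∈ Icc (w + 2) b, slack (moveParticle f w) h i + 1 = ∑ i ∈ Icc (w + 2) b, slack f h i := by
  rw [← add_sum_Ioc_eq_sum_Icc hb, ← add_sum_Ioc_eq_sum_Icc hb,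
    sum_congr rfl fun i hi => slack_moveParticle_of_add_three_le (by simp at hi; omega)]
  have hw2 : moveParticle f w (w + 2) = f (w + 2) := moveParticle_apply_of_ne (by omega) (by omega)
  simp only [slack, show w + 2 - 1 = w + 1 by ring, moveParticle_apply_add_one, hw2] at hpos ⊢
  omega

lemma moveParticle_focus_sum {h : ℕ} (hpair : f w + f (w + 1) = h)
    (hpos : 0 < slack f h (w + 2)) : moveParticle f w w + moveParticle f w (w + 1) = h := by
  rw [slack, show w + 2 - 1 = w + 1 by ring] at hpos
  rw [moveParticle_apply_self, moveParticle_apply_add_one]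
  omega

lemma moveParticle_pair_sum_le {h : ℕ} (hpos : 0 < slack f h (w + 2))
    (hbd : ∀ i, w + 1 ≤ i → f i + f (i + 1) ≤ h) (i : ℤ) (hi : w + 1 ≤ i) :
    moveParticle f w i + moveParticle f w (i + 1) ≤ h := by
  rw [moveParticle_apply_of_ne (i := i + 1) (by omega) (by omega)]
  rcases hi.lt_or_eq with hi | rfl
  · rw [moveParticle_apply_of_ne (by omega) (by omega)]
    exact hbd i hi.le
  · rw [slack, show w + 2 - 1 = w + 1 by ring] at hpos
    rw [moveParticle_apply_add_one, show w + 1 + 1 = w + 2 by ring]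
    omega

lemma stopSet_moveParticle {h m : ℕ} (hpos : 0 < slack f h (w + 2)) :
    stopSet (moveParticle f w) h w m = stopSet f h w (m + 1) := by
  ext t
  simp only [stopSet, Set.mem_ofPred_eq, and_congr_right_iff]
  intro ht
  have := sum_slack_moveParticle hpos (b := t + 2) (by omega)
  omega

end moveParticle

section stopSet

variable {f : ℤ → ℕ} {h : ℕ} {w : ℤ}

lemma isLeast_stopSet_zero : IsLeast (stopSet f h w 0) w :=
  ⟨⟨le_rfl, Nat.zero_le _⟩, fun _ ht => ht.1⟩

lemma stopSet_eq_of_slack_eq_zero (h₀ : slack f h (w + 2) = 0) {m : ℕ} (hm : 0 < m) :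
    stopSet f h w m = stopSet f h (w + 1) m := by
  have hsum := sum_Icc_eq_sum_Icc_add_one h₀
  ext t
  simp only [stopSet, Set.mem_ofPred_eq, show w + 1 + 2 = w + 2 + 1 by ring, ← hsum]
  constructor
  · rintro ⟨ht, hmt⟩
    refine ⟨lt_of_le_of_ne ht fun hwt => ?_, hmt⟩
    subst hwt
    rw [Icc_self, sum_singleton, h₀] at hmt
    omega
  · exact fun ⟨ht, hmt⟩ => ⟨by omega, hmt⟩

end stopSet

section IsMotionResult

variable {f g : ℤ → ℕ} {h m : ℕ} {v w : ℤ}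

lemma isMotionResult_zero (hpair : f w + f (w + 1) = h) (hbd : f (w + 1) + f (w + 2) ≤ h) :
    IsMotionResult f h w 0 w f := by
  refine ⟨fun _ _ => rfl, fun _ _ _ => by omega, ?_, ?_, fun _ _ => rfl⟩
  · rw [Icc_self, sum_singleton, slack, show w + 2 - 1 = w + 1 by ring]
    omega
  · rw [Icc_eq_empty_of_lt (by omega)]
    rfl

lemma IsMotionResult.of_shift (hr : IsMotionResult f h (w + 1) m v g)
    (h₀ : slack f h (w + 2) = 0) (hfw : f (w + 2) = f w) :
    IsMotionResult f h w m v g := by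
  obtain ⟨hlt, hmid, hv0, hv1, hge⟩ := hr
  have hsum := sum_Icc_eq_sum_Icc_add_one h₀
  simp only [show w + 1 + 2 = w + 2 + 1 by ring, ← hsum] at hv0 hv1
  refine ⟨fun i hi => hlt i (by omega), fun i hi hiv => ?_, hv0, hv1, hge⟩
  rcases hi.lt_or_eq with hi | rfl
  · exact hmid i hi hiv
  · rw [hlt w (by omega), hfw]

lemma IsMotionResult.of_moveParticle (hr : IsMotionResult (moveParticle f w) h w m v g)
    (hpos : 0 < slack f h (w + 2)) (hv : w ≤ v) : IsMotionResult f h w (m + 1) v g := by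
  obtain ⟨hlt, hmid, hv0, hv1, hge⟩ := hr
  refine ⟨fun i hi => ?_, fun i hi hiv => ?_, ?_, ?_, fun i hi => ?_⟩
  · rw [hlt i hi, moveParticle_apply_of_ne (by omega) (by omega)]
  · rw [hmid i hi hiv, moveParticle_apply_of_ne (by omega) (by omega)]
  · have := sum_slack_moveParticle hpos (b := v + 2) (by omega)
    rw [hv0, moveParticle_apply_of_ne (by omega) (by omega)]
    omega
  · rcases hv.lt_or_eq with hv | rfl
    · have := sum_slack_moveParticle hpos (b := v + 1) (by omega)
      rw [hv1, moveParticle_apply_of_ne (by omega) (by omega)]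
      omega
    · rw [hv1, moveParticle_apply_add_one, Icc_eq_empty_of_lt (by omega)]
      simp only [sum_empty, Nat.sub_zero]
      omega
  · rw [hge i hi, moveParticle_apply_of_ne (by omega) (by omega)]

end IsMotionResult

theorem PPM.focus_eq_and_isMotionResult {s t : (ℤ → ℕ) × ℤ} {m : ℕ} (hp : PPM s m t)
    {h : ℕ} {v : ℤ} (hpair : s.1 s.2 + s.1 (s.2 + 1) = h)
    (hbd : ∀ i, s.2 + 1 ≤ i → s.1 i + s.1 (i + 1) ≤ h)
    (hv : IsLeast (stopSet s.1 h s.2 m) v) :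
    t.2 = v ∧ IsMotionResult s.1 h s.2 m v t.1 := by
  induction hp generalizing v with
  | zero f w =>
    obtain rfl := isLeast_stopSet_zero.unique hv
    have hbd₁ := hbd (w + 1) le_rfl
    rw [show w + 1 + 1 = w + 2 by ring] at hbd₁
    exact ⟨rfl, isMotionResult_zero hpair hbd₁⟩
  | @shift f w m _ hm hcond _ ih =>
    dsimp only at hpair hbd hv ih ⊢
    have h₀ : slack f h (w + 2) = 0 := by
      simp only [slack, show w + 2 - 1 = w + 1 by ring]
      omega
    rw [stopSet_eq_of_slack_eq_zero h₀ hm] at hv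
    obtain ⟨hw, hr⟩ := ih (by rw [show w + 1 + 1 = w + 2 by ring]; omega)
      (fun i hi => hbd i (by omega)) hv
    exact ⟨hw, hr.of_shift h₀ (by omega)⟩
  | @motion f w m _ hcond _ ih =>
    dsimp only at hpair hbd hv ih ⊢
    have hpos : 0 < slack f h (w + 2) := by
      simp only [slack, show w + 2 - 1 = w + 1 by ring]
      omega
    obtain ⟨hw, hr⟩ := ih (v := v) (moveParticle_focus_sum hpair hpos)
        (moveParticle_pair_sum_le hpos hbd) <| by
      show IsLeast (stopSet (moveParticle f w) h w m) v
      rwa [stopSet_moveParticle hpos]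
    exact ⟨hw, hr.of_moveParticle hpos hv.1.1⟩

theorem stmt2_general (f : ℤ → ℕ) (u v : ℤ) (h m : ℕ)
    (hfu : f u = h) (hfu1 : f (u+1) = 0)
    (hbd : ∀ i, u ≤ i → f i + f (i+1) ≤ h)
    (hv : IsLeast {t : ℤ | u ≤ t ∧
      m ≤ ∑ i ∈ Finset.Icc (u+2) (t+2), (h - (f (i-1) + f i))} v)
    (fbar : ℤ → ℕ) (w : ℤ) (hppm : PPM (f, u) m (fbar, w)) :
    w = v ∧
    (∀ i, i < u → fbar i = f i) ∧
    (∀ i, u ≤ i → i < v → fbar i = f (i+2)) ∧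
    fbar v = f (v+2) + ((∑ j ∈ Finset.Icc (u+2) (v+2), (h - (f (j-1) + f j))) - m) ∧
    fbar (v+1) = f (v+1) + (m - ∑ j ∈ Finset.Icc (u+2) (v+1), (h - (f (j-1) + f j))) ∧
    (∀ i, v + 2 ≤ i → fbar i = f i) :=
  hppm.focus_eq_and_isMotionResult (show f u + f (u + 1) = h by rw [hfu, hfu1, add_zero])
    (fun i hi => hbd i (by omega)) hv

/-- Explicit description of the result of `m` particle motions (Proposition 5.4 of
[DJJ25] as restated in the paper): if `(f_u, f_{u+1}) = (h, 0)` with `h ≥ 1`,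
`f_i + f_{i+1} ≤ h` for `i ≥ u`, and `v` is the least `t ≥ u` with
`∑_{i=u+2}^{t+2} (h - (f_{i-1} + f_i)) ≥ m`, then the pair moves to position `(v, v+1)`
and the resulting sequence is given by the stated explicit formula. -/
theorem stmt2 (f : ℤ → ℕ) (hfin : (Function.support f).Finite) (u v : ℤ) (h m : ℕ)
    (hh : 1 ≤ h) (hfu : f u = h) (hfu1 : f (u+1) = 0)
    (hbd : ∀ i, u ≤ i → f i + f (i+1) ≤ h)
    (hv : IsLeast {t : ℤ | u ≤ t ∧
      m ≤ ∑ i ∈ Finset.Icc (u+2) (t+2), (h - (f (i-1) + f i))} v)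
    (fbar : ℤ → ℕ) (w : ℤ) (hppm : PPM (f, u) m (fbar, w)) :
    w = v ∧
    (∀ i, i < u → fbar i = f i) ∧
    (∀ i, u ≤ i → i < v → fbar i = f (i+2)) ∧
    fbar v = f (v+2) + ((∑ j ∈ Finset.Icc (u+2) (v+2), (h - (f (j-1) + f j))) - m) ∧
    fbar (v+1) = f (v+1) + (m - ∑ j ∈ Finset.Icc (u+2) (v+1), (h - (f (j-1) + f j))) ∧
    (∀ i, v + 2 ≤ i → fbar i = f i) :=
  stmt2_general f u v h m hfu hfu1 hbd hv fbar w hppm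
end

section
/- For non-negative integers j, r, k with j + r ≤ k, and fixed s₁ ≥ ⋯ ≥ s_k ≥ 0 (with s_{k+1}=0), the generating function for k-tuples of partitions λ = (λ⁽¹⁾,...,λ⁽ᵏ⁾), where λ⁽ᵐ⁾ has exactly s_m - s_{m+1} parts, all parts of λ⁽ᵐ⁾ are even, and each part of λ⁽ᵐ⁾ is at least m - j + max{m-(k-r), 0}, equals q^{2s_{j+1} + 2s_{j+3} + ⋯ (alternating up to index k-r) + 2s_{k-r+1} + 2s_{k-r+2} + ⋯ + 2s_k} / ((q²;q²)_{s₁-s₂} ⋯ (q²;q²)_{s_{k-1}-s_k} (q²;q²)_{s_k}), where the first group of exponents is 2s_{j+1} + 2s_{j+3} + ⋯ + 2s_{k-r-1} if k-r-j is even and 2s_{j+1} + 2s_{j+3} + ⋯ + 2s_{k-r} if k-r-j is odd. -/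
/-- `(q²;q²)_n` as a formal power series in `q = X`. -/
noncomputable def poch2 (n : ℕ) : PowerSeries ℚ :=
  ∏ i ∈ Finset.range n, (1 - (PowerSeries.X : PowerSeries ℚ) ^ (2*i + 2))

/-!
Subtracting from every part of `λ⁽ᵐ⁾` the least admissible even value `e_m`, and recording the
gaps `λ⁽ᵐ⁾_i - λ⁽ᵐ⁾_{i+1}` (with `λ⁽ᵐ⁾_{N_m} := e_m`, where `N_m = s_m - s_{m+1}`), identifies
the tuples of weight `∑ N_m e_m + n` with families `l_{m,i} = (i+1)·gap` of total `n` in which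
`l_{m,i}` is a multiple of `2(i+1)`, for `i < N_m`. These families are counted by the coefficient
of `q^n` in `∏_m ∏_{i < N_m} 1/(1 - q^{2i+2}) = ∏_m 1/(q²;q²)_{N_m}`. Summation by parts turns
`∑ N_m e_m` into `∑ s_m (e_m - e_{m-1})`, and `e_m - e_{m-1}` is `2` exactly at the indices
appearing in the stated exponent and `0` elsewhere.
-/

open Finset PowerSeries

namespace PowerSeries

variable {k : Type*} [Field k]

theorem inv_prod {ι : Type*} (s : Finset ι) (f : ι → k⟦X⟧) :
    (∏ i ∈ s, f i)⁻¹ = ∏ i ∈ s, (f i)⁻¹ := by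
  classical
  induction s using Finset.induction with
  | empty => simp
  | insert a s h ih => rw [prod_insert h, prod_insert h, PowerSeries.mul_inv_rev, ih, mul_comm]

theorem inv_one_sub_X_pow {w : ℕ} (hw : w ≠ 0) :
    (1 - X ^ w : k⟦X⟧)⁻¹ = mk fun n => if w ∣ n then 1 else 0 := by
  symm
  rw [eq_inv_iff_mul_eq_one (by simp [hw])]
  ext n
  rw [mul_sub, mul_one, map_sub, coeff_mul_X_pow', coeff_mk, coeff_one]
  rcases n.eq_zero_or_pos with rfl | hn
  · simp [hw]
  · by_cases hwn : w ≤ n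
    · have hle : n ≤ w → w ∣ n := fun h => le_antisymm h hwn ▸ dvd_rfl
      simp [hn.ne', hwn, Nat.dvd_sub_self_right, or_iff_left_of_imp hle]
    · have hndvd : ¬ w ∣ n := fun h => hwn (Nat.le_of_dvd hn h)
      simp [hn.ne', hwn, hndvd]

theorem coeff_prod_inv_one_sub_X_pow {ι : Type*} [DecidableEq ι] (s : Finset ι) (w : ι → ℕ)
    (hw : ∀ i ∈ s, w i ≠ 0) (n : ℕ) :
    coeff n (∏ i ∈ s, (1 - X ^ w i : k⟦X⟧)⁻¹) =
      #{l ∈ s.finsuppAntidiag n | ∀ i ∈ s, w i ∣ l i} := by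
  rw [prod_congr rfl fun i hi => inv_one_sub_X_pow (hw i hi), coeff_prod, card_filter]
  push_cast
  refine sum_congr rfl fun l _ => ?_
  simp only [coeff_mk]
  exact prod_boole

end PowerSeries

section Gaps

variable (N e : ℕ)

def partGaps (y : ℕ → ℕ) (i : ℕ) : ℕ := y i - if i + 1 < N then y (i + 1) else e

def ofPartGaps (d : ℕ → ℕ) (p : ℕ) : ℕ := e + ∑ i ∈ Ico p N, d i

variable {N e} {d d' y y' : ℕ → ℕ}

@[simp] lemma ofPartGaps_self : ofPartGaps N e d N = e := by simp [ofPartGaps]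

lemma ofPartGaps_of_lt {p : ℕ} (hp : p < N) :
    ofPartGaps N e d p = d p + ofPartGaps N e d (p + 1) := by
  rw [ofPartGaps, ofPartGaps, sum_eq_sum_Ico_succ_bot hp]; ring

lemma ofPartGaps_congr (h : ∀ i < N, d i = d' i) (p : ℕ) :
    ofPartGaps N e d p = ofPartGaps N e d' p :=
  congrArg (e + ·) (sum_congr rfl fun i hi => h i (mem_Ico.1 hi).2)

lemma le_ofPartGaps (p : ℕ) : e ≤ ofPartGaps N e d p := Nat.le_add_right _ _

lemma ofPartGaps_succ_le (p : ℕ) : ofPartGaps N e d (p + 1) ≤ ofPartGaps N e d p :=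
  Nat.add_le_add_left (sum_le_sum_of_subset (Ico_subset_Ico_left p.le_succ)) e

lemma even_ofPartGaps (he : Even e) (hd : ∀ i < N, Even (d i)) (p : ℕ) :
    Even (ofPartGaps N e d p) :=
  he.add (even_sum _ fun i hi => hd i (mem_Ico.1 hi).2)

lemma sum_ofPartGaps :
    ∑ p ∈ range N, ofPartGaps N e d p = N * e + ∑ i ∈ range N, (i + 1) * d i := by
  simp only [ofPartGaps, sum_add_distrib, sum_const, card_range, smul_eq_mul]
  congr 1
  rw [range_eq_Ico, sum_Ico_Ico_comm]
  refine sum_congr rfl fun i _ => ?_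
  rw [sum_const, Nat.card_Ico, smul_eq_mul, Nat.sub_zero]

lemma partGaps_ofPartGaps {i : ℕ} (hi : i < N) : partGaps N e (ofPartGaps N e d) i = d i := by
  have hnext : (if i + 1 < N then ofPartGaps N e d (i + 1) else e) = ofPartGaps N e d (i + 1) := by
    split_ifs with h
    · rfl
    · rw [show i + 1 = N by omega, ofPartGaps_self]
  rw [partGaps, hnext, ofPartGaps_of_lt hi, Nat.add_sub_cancel]

lemma ofPartGaps_partGaps (hy : ∀ i, i + 1 < N → y (i + 1) ≤ y i) (he : ∀ i < N, e ≤ y i)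
    {p : ℕ} (hp : p < N) : ofPartGaps N e (partGaps N e y) p = y p := by
  refine Nat.decreasingInduction
    (motive := fun p _ => p < N → ofPartGaps N e (partGaps N e y) p = y p)
    (fun q hq ih _ => ?_) (fun h => absurd h (lt_irrefl N)) hp.le hp
  rw [ofPartGaps_of_lt hq, partGaps]
  split_ifs with h
  · rw [ih h, Nat.sub_add_cancel (hy q h)]
  · rw [show q + 1 = N by omega, ofPartGaps_self, Nat.sub_add_cancel (he q hq)]

lemma partGaps_congr (h : ∀ p < N, y p = y' p) {i : ℕ} (hi : i < N) :
    partGaps N e y i = partGaps N e y' i := by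
  simp only [partGaps]
  split_ifs with h'
  · rw [h i hi, h (i + 1) h']
  · rw [h i hi]

lemma even_partGaps (he : Even e) (hy : ∀ p < N, Even (y p)) {i : ℕ} (hi : i < N) :
    Even (partGaps N e y i) :=
  (hy i hi).tsub (by split_ifs with h; exacts [hy _ h, he])

lemma sum_eq_add_sum_mul_partGaps (hy : ∀ i, i + 1 < N → y (i + 1) ≤ y i)
    (he : ∀ i < N, e ≤ y i) :
    ∑ p ∈ range N, y p = N * e + ∑ i ∈ range N, (i + 1) * partGaps N e y i := by
  rw [← sum_ofPartGaps]
  exact sum_congr rfl fun p hp => (ofPartGaps_partGaps hy he (mem_range.1 hp)).symm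

end Gaps

section Tuples

variable (k : ℕ) (N e : ℕ → ℕ)

def cells : Finset (Σ _ : ℕ, ℕ) := (Icc 1 k).sigma fun t => range (N t)

@[simp] lemma mem_cells {a : Σ _ : ℕ, ℕ} : a ∈ cells k N ↔ a.1 ∈ Icc 1 k ∧ a.2 < N a.1 := by
  simp [cells]

def IsEvenPartTuple (lam : ℕ → ℕ → ℕ) : Prop :=
  (∀ m ∈ Icc 1 k, ∀ p, p + 1 < N m → lam m (p + 1) ≤ lam m p) ∧
  (∀ m ∈ Icc 1 k, ∀ p, p < N m → Even (lam m p) ∧ e m ≤ lam m p) ∧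
  (∀ m p, (m ∉ Icc 1 k ∨ N m ≤ p) → lam m p = 0)

def tupleWeight (lam : ℕ → ℕ → ℕ) : ℕ := ∑ m ∈ Icc 1 k, ∑ p ∈ range (N m), lam m p

def evenCellWeights (n : ℕ) : Finset ((Σ _ : ℕ, ℕ) →₀ ℕ) :=
  {l ∈ (cells k N).finsuppAntidiag n | ∀ a ∈ cells k N, 2 * a.2 + 2 ∣ l a}

noncomputable def toCellWeights (lam : ℕ → ℕ → ℕ) : (Σ _ : ℕ, ℕ) →₀ ℕ :=
  Finsupp.indicator (cells k N) fun a _ => (a.2 + 1) * partGaps (N a.1) (e a.1) (lam a.1) a.2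

def ofCellWeights (l : (Σ _ : ℕ, ℕ) →₀ ℕ) (t p : ℕ) : ℕ :=
  if t ∈ Icc 1 k ∧ p < N t then ofPartGaps (N t) (e t) (fun i => l ⟨t, i⟩ / (i + 1)) p else 0

variable {k N e}

lemma toCellWeights_apply {lam : ℕ → ℕ → ℕ} {a : Σ _ : ℕ, ℕ} (ha : a ∈ cells k N) :
    toCellWeights k N e lam a = (a.2 + 1) * partGaps (N a.1) (e a.1) (lam a.1) a.2 := by
  classical
  rw [toCellWeights, Finsupp.indicator_apply, dif_pos ha]

lemma ofCellWeights_of_lt {l : (Σ _ : ℕ, ℕ) →₀ ℕ} {t p : ℕ} (ht : t ∈ Icc 1 k) (hp : p < N t) :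
    ofCellWeights k N e l t p = ofPartGaps (N t) (e t) (fun i => l ⟨t, i⟩ / (i + 1)) p :=
  if_pos ⟨ht, hp⟩

lemma dvd_of_mem_evenCellWeights {n : ℕ} {l : (Σ _ : ℕ, ℕ) →₀ ℕ} (hl : l ∈ evenCellWeights k N n)
    {a : Σ _ : ℕ, ℕ} (ha : a ∈ cells k N) : a.2 + 1 ∣ l a ∧ 2 ∣ l a / (a.2 + 1) := by
  have h := (mem_filter.1 hl).2 a ha
  rw [show 2 * a.2 + 2 = (a.2 + 1) * 2 by ring] at h
  exact ⟨dvd_of_mul_right_dvd h, (Nat.dvd_div_iff_mul_dvd (dvd_of_mul_right_dvd h)).2 h⟩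

lemma tupleWeight_eq {lam : ℕ → ℕ → ℕ} (h : IsEvenPartTuple k N e lam) :
    tupleWeight k N lam =
      ∑ t ∈ Icc 1 k, N t * e t + ∑ a ∈ cells k N, toCellWeights k N e lam a := by
  rw [tupleWeight, cells, sum_sigma, ← sum_add_distrib]
  refine sum_congr rfl fun t ht => ?_
  rw [sum_eq_add_sum_mul_partGaps (h.1 t ht) fun p hp => (h.2.1 t ht p hp).2]
  congr 1
  exact sum_congr rfl fun i hi =>
    (toCellWeights_apply (a := ⟨t, i⟩) ((mem_cells k N).2 ⟨ht, mem_range.1 hi⟩)).symm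

lemma toCellWeights_mem_evenCellWeights {lam : ℕ → ℕ → ℕ} (he : ∀ m, Even (e m))
    (h : IsEvenPartTuple k N e lam) {n : ℕ}
    (hn : tupleWeight k N lam = ∑ t ∈ Icc 1 k, N t * e t + n) :
    toCellWeights k N e lam ∈ evenCellWeights k N n := by
  classical
  refine mem_filter.2 ⟨mem_finsuppAntidiag.2 ⟨?_, Finsupp.support_indicator_subset _ _⟩,
    fun a ha => ?_⟩
  · rw [tupleWeight_eq h] at hn
    exact Nat.add_left_cancel hn
  · obtain ⟨ht, hi⟩ := (mem_cells k N).1 ha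
    rw [toCellWeights_apply ha, show 2 * a.2 + 2 = (a.2 + 1) * 2 by ring]
    exact mul_dvd_mul_left _ (even_partGaps (he _) (fun p hp => (h.2.1 _ ht p hp).1) hi).two_dvd

lemma isEvenPartTuple_ofCellWeights (he : ∀ m, Even (e m)) {n : ℕ} {l : (Σ _ : ℕ, ℕ) →₀ ℕ}
    (hl : l ∈ evenCellWeights k N n) : IsEvenPartTuple k N e (ofCellWeights k N e l) := by
  refine ⟨fun m hm p hp => ?_, fun m hm p hp => ?_, fun m p hmp => ?_⟩
  · rw [ofCellWeights_of_lt hm hp, ofCellWeights_of_lt hm (by omega)]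
    exact ofPartGaps_succ_le p
  · rw [ofCellWeights_of_lt hm hp]
    refine ⟨even_ofPartGaps (he m) (fun i hi => ?_) p, le_ofPartGaps p⟩
    exact even_iff_two_dvd.2 (dvd_of_mem_evenCellWeights hl ((mem_cells k N).2 ⟨hm, hi⟩)).2
  · exact if_neg fun h => hmp.elim (· h.1) fun h' => by omega

lemma ofCellWeights_toCellWeights {lam : ℕ → ℕ → ℕ} (h : IsEvenPartTuple k N e lam) :
    ofCellWeights k N e (toCellWeights k N e lam) = lam := by
  funext t p
  by_cases hc : t ∈ Icc 1 k ∧ p < N t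
  · rw [ofCellWeights_of_lt hc.1 hc.2]
    rw [ofPartGaps_congr (d' := partGaps (N t) (e t) (lam t)) (fun i hi => ?_)]
    · exact ofPartGaps_partGaps (h.1 t hc.1) (fun p hp => (h.2.1 t hc.1 p hp).2) hc.2
    · rw [toCellWeights_apply ((mem_cells k N).2 ⟨hc.1, hi⟩)]
      exact Nat.mul_div_cancel_left _ i.succ_pos
  · rw [ofCellWeights, if_neg hc, h.2.2 t p (by rw [not_and_or, not_lt] at hc; exact hc)]

lemma toCellWeights_ofCellWeights {n : ℕ} {l : (Σ _ : ℕ, ℕ) →₀ ℕ}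
    (hl : l ∈ evenCellWeights k N n) : toCellWeights k N e (ofCellWeights k N e l) = l := by
  classical
  ext a
  by_cases ha : a ∈ cells k N
  · obtain ⟨ht, hi⟩ := (mem_cells k N).1 ha
    rw [toCellWeights_apply ha, partGaps_congr (y' := ofPartGaps _ _ _)
      (fun p hp => ofCellWeights_of_lt ht hp) hi, partGaps_ofPartGaps hi]
    exact Nat.mul_div_cancel' (dvd_of_mem_evenCellWeights hl ha).1
  · have hsupp := (mem_finsuppAntidiag.1 (mem_filter.1 hl).1).2
    rw [toCellWeights, Finsupp.indicator_apply, dif_neg ha,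
      Finsupp.notMem_support_iff.1 fun h => ha (hsupp h)]

lemma tupleWeight_ofCellWeights (he : ∀ m, Even (e m)) {n : ℕ} {l : (Σ _ : ℕ, ℕ) →₀ ℕ}
    (hl : l ∈ evenCellWeights k N n) :
    tupleWeight k N (ofCellWeights k N e l) = ∑ t ∈ Icc 1 k, N t * e t + n := by
  rw [tupleWeight_eq (isEvenPartTuple_ofCellWeights he hl), toCellWeights_ofCellWeights hl,
    (mem_finsuppAntidiag.1 (mem_filter.1 hl).1).1]

lemma card_isEvenPartTuple (he : ∀ m, Even (e m)) (n : ℕ) :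
    Nat.card {lam // IsEvenPartTuple k N e lam ∧
      tupleWeight k N lam = ∑ t ∈ Icc 1 k, N t * e t + n} = #(evenCellWeights k N n) := by
  rw [← Nat.card_eq_finsetCard]
  exact Nat.card_congr
    { toFun := fun lam => ⟨toCellWeights k N e lam,
        toCellWeights_mem_evenCellWeights he lam.2.1 lam.2.2⟩
      invFun := fun l => ⟨ofCellWeights k N e l,
        isEvenPartTuple_ofCellWeights he l.2, tupleWeight_ofCellWeights he l.2⟩
      left_inv := fun lam => Subtype.ext (ofCellWeights_toCellWeights lam.2.1)
      right_inv := fun l => Subtype.ext (toCellWeights_ofCellWeights l.2) }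

lemma card_isEvenPartTuple_of_lt {n : ℕ} (hn : n < ∑ t ∈ Icc 1 k, N t * e t) :
    Nat.card {lam // IsEvenPartTuple k N e lam ∧ tupleWeight k N lam = n} = 0 := by
  have : IsEmpty {lam // IsEvenPartTuple k N e lam ∧ tupleWeight k N lam = n} :=
    ⟨fun ⟨lam, h, hw⟩ => by rw [tupleWeight_eq h] at hw; omega⟩
  exact Nat.card_of_isEmpty

end Tuples

lemma prod_inv_poch2 (k : ℕ) (N : ℕ → ℕ) :
    ∏ t ∈ Icc 1 k, (poch2 (N t))⁻¹ = ∏ a ∈ cells k N, (1 - X ^ (2 * a.2 + 2) : ℚ⟦X⟧)⁻¹ := by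
  rw [cells, prod_sigma]
  exact prod_congr rfl fun t _ => by rw [poch2, inv_prod]

lemma sum_Icc_by_parts {f g : ℕ → ℕ} (hg : Monotone g) (K : ℕ)
    (hf : ∀ m ∈ Icc 1 K, f (m + 1) ≤ f m) :
    ∑ t ∈ Icc 1 K, (f t - f (t + 1)) * g t + f (K + 1) * g K
      = ∑ t ∈ Icc 1 K, f t * (g t - g (t - 1)) + f 1 * g 0 := by
  induction K with
  | zero => simp
  | succ K ih =>
    rw [sum_Icc_succ_top (by omega), sum_Icc_succ_top (by omega)]
    have H := ih fun m hm => hf m (Icc_subset_Icc_right K.le_succ hm)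
    have hf' : f (K + 1 + 1) ≤ f (K + 1) := hf (K + 1) (by simp)
    have hg' : g K ≤ g (K + 1) := hg K.le_succ
    have e1 : (f (K + 1) - f (K + 1 + 1)) * g (K + 1)
        = f (K + 1) * g (K + 1) - f (K + 1 + 1) * g (K + 1) := Nat.sub_mul _ _ _
    have e2 : f (K + 1) * (g (K + 1) - g K) = f (K + 1) * g (K + 1) - f (K + 1) * g K :=
      Nat.mul_sub _ _ _
    have i1 : f (K + 1 + 1) * g (K + 1) ≤ f (K + 1) * g (K + 1) := Nat.mul_le_mul_right _ hf'
    have i2 : f (K + 1) * g K ≤ f (K + 1) * g (K + 1) := Nat.mul_le_mul_left _ hg'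
    simp only [Nat.add_sub_cancel]
    omega

section Exponent

variable {j r k : ℕ}

def evenLowerBound (j r k m : ℕ) : ℕ :=
  (m - j) + (m - (k - r)) + ((m - j) + (m - (k - r))) % 2

lemma even_evenLowerBound (j r k m : ℕ) : Even (evenLowerBound j r k m) := by
  rw [Nat.even_iff, evenLowerBound]; omega

lemma monotone_evenLowerBound (j r k : ℕ) : Monotone (evenLowerBound j r k) := by
  intro m m' h; simp only [evenLowerBound]; omega

lemma le_iff_evenLowerBound_le (hjr : j + r ≤ k) (m : ℕ) {v : ℕ} (hv : Even v) :
    (m : ℤ) - j + max ((m : ℤ) - ((k : ℤ) - r)) 0 ≤ v ↔ evenLowerBound j r k m ≤ v := by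
  obtain ⟨u, rfl⟩ := hv
  rw [evenLowerBound]
  rcases le_total ((m : ℤ) - ((k : ℤ) - r)) 0 with h | h
  · rw [max_eq_right h]; omega
  · rw [max_eq_left h]; omega

lemma evenLowerBound_sub_pred (hjr : j + r ≤ k) {t : ℕ} (ht : t ∈ Icc 1 k) :
    evenLowerBound j r k t - evenLowerBound j r k (t - 1) =
      (if t ∈ Icc (j + 1) (k - r) ∧ Odd (t - j) then 2 else 0)
        + (if t ∈ Icc (k - r + 1) k then 2 else 0) := by
  simp only [evenLowerBound, mem_Icc, Nat.odd_iff] at ht ⊢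
  split_ifs <;> omega

lemma sum_sub_mul_evenLowerBound (hjr : j + r ≤ k) {s : ℕ → ℕ}
    (hdec : ∀ m, 1 ≤ m → m ≤ k → s (m + 1) ≤ s m) (hsk : s (k + 1) = 0) :
    ∑ t ∈ Icc 1 k, (s t - s (t + 1)) * evenLowerBound j r k t =
      2 * ∑ t ∈ (Icc (j + 1) (k - r)).filter (fun t => Odd (t - j)), s t
        + 2 * ∑ t ∈ Icc (k - r + 1) k, s t := by
  have hparts := sum_Icc_by_parts (monotone_evenLowerBound j r k) k
    fun m hm => hdec m (mem_Icc.1 hm).1 (mem_Icc.1 hm).2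
  have hzero : evenLowerBound j r k 0 = 0 := by simp [evenLowerBound]
  rw [hsk, hzero, zero_mul, mul_zero, add_zero, add_zero] at hparts
  rw [hparts, sum_congr rfl fun t ht => by
    rw [evenLowerBound_sub_pred hjr ht, mul_add, mul_ite, mul_ite, mul_zero],
    sum_add_distrib, sum_ite, sum_ite, sum_const_zero, sum_const_zero, add_zero, add_zero,
    ← sum_mul, ← sum_mul, mul_comm, mul_comm (∑ _ ∈ _, _)]
  have hodd : {t ∈ Icc 1 k | t ∈ Icc (j + 1) (k - r) ∧ Odd (t - j)}
      = {t ∈ Icc (j + 1) (k - r) | Odd (t - j)} := by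
    ext t; simp only [mem_filter, mem_Icc, Nat.odd_iff]; omega
  have htop : {t ∈ Icc 1 k | t ∈ Icc (k - r + 1) k} = Icc (k - r + 1) k := by
    ext t; simp only [mem_filter, mem_Icc]; omega
  rw [hodd, htop]

end Exponent

theorem stmt5_general (j r k : ℕ) (hjr : j + r ≤ k) (s : ℕ → ℕ)
    (hdec : ∀ m, 1 ≤ m → m ≤ k → s (m+1) ≤ s m) (hsk : s (k+1) = 0) :
    PowerSeries.mk (fun n =>
      (Nat.card {lam : ℕ → ℕ → ℕ //
        (∀ m ∈ Finset.Icc 1 k, ∀ p, p + 1 < s m - s (m+1) → lam m (p+1) ≤ lam m p) ∧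
        (∀ m ∈ Finset.Icc 1 k, ∀ p, p < s m - s (m+1) →
          Even (lam m p) ∧ (m : ℤ) - j + max ((m : ℤ) - ((k : ℤ) - r)) 0 ≤ lam m p) ∧
        (∀ m p, (m ∉ Finset.Icc 1 k ∨ s m - s (m+1) ≤ p) → lam m p = 0) ∧
        (∑ m ∈ Finset.Icc 1 k, ∑ p ∈ Finset.range (s m - s (m+1)), lam m p) = n} : ℚ))
    = (PowerSeries.X : PowerSeries ℚ) ^
        (2 * ∑ t ∈ (Finset.Icc (j+1) (k-r)).filter (fun t => Odd (t - j)), s t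
          + 2 * ∑ t ∈ Finset.Icc (k-r+1) k, s t)
      * ∏ t ∈ Finset.Icc 1 k, (poch2 (s t - s (t+1)))⁻¹ := by
  classical
  set N := fun t => s t - s (t + 1)
  set e := evenLowerBound j r k
  have hcount : ∀ n, Nat.card {lam : ℕ → ℕ → ℕ //
      (∀ m ∈ Icc 1 k, ∀ p, p + 1 < N m → lam m (p+1) ≤ lam m p) ∧
      (∀ m ∈ Icc 1 k, ∀ p, p < N m →
        Even (lam m p) ∧ (m : ℤ) - j + max ((m : ℤ) - ((k : ℤ) - r)) 0 ≤ lam m p) ∧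
      (∀ m p, (m ∉ Icc 1 k ∨ N m ≤ p) → lam m p = 0) ∧
      ∑ m ∈ Icc 1 k, ∑ p ∈ range (N m), lam m p = n}
      = Nat.card {lam // IsEvenPartTuple k N e lam ∧ tupleWeight k N lam = n} := fun n =>
    Nat.card_congr <| Equiv.subtypeEquivRight fun lam => by
      simp only [IsEvenPartTuple, tupleWeight, and_assoc]
      exact and_congr_right' <| and_congr_left' <| forall₂_congr fun m _ => forall₂_congr
        fun p _ => and_congr_right fun hev => le_iff_evenLowerBound_le hjr m hev
  rw [← sum_sub_mul_evenLowerBound hjr hdec hsk, prod_inv_poch2]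
  ext n
  rw [coeff_mk, mul_comm, coeff_mul_X_pow', hcount n]
  split_ifs with hn
  · obtain ⟨m, rfl⟩ := Nat.exists_eq_add_of_le hn
    rw [coeff_prod_inv_one_sub_X_pow _ _ fun _ _ => by omega,
      card_isEvenPartTuple (even_evenLowerBound j r k), Nat.add_sub_cancel_left]
    rfl
  · rw [card_isEvenPartTuple_of_lt (not_le.1 hn), Nat.cast_zero]

/-- For `j + r ≤ k` and fixed `s₁ ≥ ⋯ ≥ s_k ≥ 0` (with `s_{k+1} = 0`), the generating
function for `k`-tuples of partitions `(λ⁽¹⁾,…,λ⁽ᵏ⁾)` — `λ⁽ᵐ⁾` having exactly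
`s_m - s_{m+1}` parts (here `lam m p` is the `p`-th part of `λ⁽ᵐ⁾`, padded by `0`
elsewhere), all parts even and each at least `m - j + max{m-(k-r),0}` — equals
`q^{2s_{j+1} + 2s_{j+3} + ⋯ (± up to k-r) + 2(s_{k-r+1} + ⋯ + s_k)}` divided by
`(q²;q²)_{s₁-s₂} ⋯ (q²;q²)_{s_{k-1}-s_k}(q²;q²)_{s_k}`; the first exponent group is the
sum of `2 s_t` over `j < t ≤ k-r` with `t - j` odd. -/
theorem stmt5 (j r k : ℕ) (hk : 1 ≤ k) (hjr : j + r ≤ k) (s : ℕ → ℕ)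
    (hdec : ∀ m, 1 ≤ m → m ≤ k → s (m+1) ≤ s m) (hsk : s (k+1) = 0) :
    PowerSeries.mk (fun n =>
      (Nat.card {lam : ℕ → ℕ → ℕ //
        (∀ m ∈ Finset.Icc 1 k, ∀ p, p + 1 < s m - s (m+1) → lam m (p+1) ≤ lam m p) ∧
        (∀ m ∈ Finset.Icc 1 k, ∀ p, p < s m - s (m+1) →
          Even (lam m p) ∧ (m : ℤ) - j + max ((m : ℤ) - ((k : ℤ) - r)) 0 ≤ lam m p) ∧
        (∀ m p, (m ∉ Finset.Icc 1 k ∨ s m - s (m+1) ≤ p) → lam m p = 0) ∧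
        (∑ m ∈ Finset.Icc 1 k, ∑ p ∈ Finset.range (s m - s (m+1)), lam m p) = n} : ℚ))
    = (PowerSeries.X : PowerSeries ℚ) ^
        (2 * ∑ t ∈ (Finset.Icc (j+1) (k-r)).filter (fun t => Odd (t - j)), s t
          + 2 * ∑ t ∈ Finset.Icc (k-r+1) k, s t)
      * ∏ t ∈ Finset.Icc 1 k, (poch2 (s t - s (t+1)))⁻¹ :=
  stmt5_general j r k hjr s hdec hsk
end

section
/- Let a, b ≥ 1, k be non-negative integers with 2a + 2b - 1 ≤ k, and let Z^e_{a,b,k}, Z̃^e_{a,b,k} be as follows: Z^e_{a,b,k} consists of frequency sequences f with f_i + f_{i+1} ≤ k for all i ≥ 0, f_i = 0 for i < 0, f_0 ≤ 2a, 2f_0 + f_1 ≤ k - 2b + 2a, and f_i even for all even i; Z̃^e_{a,b,k} is the same with bound k - 2b + 2a + 1. Then as formal power series, (1 + q) Σ_{f ∈ Z̃^e_{a,b,k}} q^{|f|} = Σ_{f ∈ Z^e_{a,b-1,k}} q^{|f|} + q Σ_{f ∈ Z^e_{a,b,k}} q^{|f|}. -/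
/-- The set `Z^e_{a,b,k}` of frequency sequences `f : ℤ → ℕ` with finite support such
that `f_i + f_{i+1} ≤ k` for all `i ≥ 0`, `f_i = 0` for `i < 0`, `f_0 ≤ 2a`,
`2f_0 + f_1 ≤ k - 2b + 2a`, and `f_i` even for every even `i`. -/
def ZsetE (a b k : ℕ) : Set (ℤ → ℕ) :=
  {f | (Function.support f).Finite ∧ (∀ i : ℤ, 0 ≤ i → f i + f (i+1) ≤ k) ∧
    (∀ i : ℤ, i < 0 → f i = 0) ∧ f 0 ≤ 2*a ∧
    2*(f 0 : ℤ) + (f 1 : ℤ) ≤ (k : ℤ) - 2*b + 2*a ∧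
    ∀ i : ℤ, Even i → Even (f i)}

/-- The set `Z̃^e_{a,b,k}`: as `Z^e_{a,b,k}` but with `2f_0 + f_1 ≤ k - 2b + 2a + 1`. -/
def ZtilE (a b k : ℕ) : Set (ℤ → ℕ) :=
  {f | (Function.support f).Finite ∧ (∀ i : ℤ, 0 ≤ i → f i + f (i+1) ≤ k) ∧
    (∀ i : ℤ, i < 0 → f i = 0) ∧ f 0 ≤ 2*a ∧
    2*(f 0 : ℤ) + (f 1 : ℤ) ≤ (k : ℤ) - 2*b + 2*a + 1 ∧
    ∀ i : ℤ, Even i → Even (f i)}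

/-- The generating function of a set of frequency sequences: the coefficient of `qⁿ` is
the number of its elements of weight `n` (the weight being `∑ i·f_i`). -/
noncomputable def GF (S : Set (ℤ → ℕ)) : PowerSeries ℚ :=
  PowerSeries.mk fun n =>
    (Nat.card {f : ℤ → ℕ // f ∈ S ∧ ∑ᶠ i : ℤ, i * (f i : ℤ) = (n : ℤ)} : ℚ)

/-!
With `m = k - 2b + 2a + 1`, let `Z≤ m` and `Z= m` be the admissible sequences with `2f₀ + f₁ ≤ m`,
resp. `= m`; then `Z^e_{a,b,k} = Z≤ (m-1)`, `Z̃^e_{a,b,k} = Z≤ m` and `Z^e_{a,b-1,k} = Z≤ (m+1)`.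
Splitting off the top level gives `G(Z≤ (m+1)) = G(Z≤ m) + G(Z= (m+1))` and
`G(Z≤ m) = G(Z≤ (m-1)) + G(Z= m)`, while raising `f₁` by one is a bijection `Z= m → Z= (m+1)`
that raises the weight by one, so `G(Z= (m+1)) = q G(Z= m)`. Eliminating `G(Z= m)` gives the
identity.
-/

noncomputable def weight (f : ℤ → ℕ) : ℤ := ∑ᶠ i : ℤ, i * (f i : ℤ)

section Weight

variable {f g : ℤ → ℕ}

lemma support_weight_term_subset (f : ℤ → ℕ) :
    Function.support (fun i : ℤ => i * (f i : ℤ)) ⊆ Function.support f := by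
  intro i hi h
  simp [h] at hi

lemma weight_term_nonneg (hneg : ∀ i < 0, f i = 0) (i : ℤ) : 0 ≤ i * (f i : ℤ) := by
  rcases lt_or_ge i 0 with h | h
  · simp [hneg i h]
  · positivity

lemma weight_nonneg (hneg : ∀ i < 0, f i = 0) : 0 ≤ weight f :=
  finsum_nonneg (weight_term_nonneg hneg)

lemma mul_apply_le_weight (hf : (Function.support f).Finite) (hneg : ∀ i < 0, f i = 0) (j : ℤ) :
    j * (f j : ℤ) ≤ weight f :=
  single_le_finsum j (hf.subset (support_weight_term_subset f)) (weight_term_nonneg hneg)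

lemma apply_le_weight (hf : (Function.support f).Finite) (hneg : ∀ i < 0, f i = 0) {j : ℤ}
    (hj : 1 ≤ j) : (f j : ℤ) ≤ weight f :=
  (le_mul_of_one_le_left (by positivity) hj).trans (mul_apply_le_weight hf hneg j)

lemma apply_eq_zero_of_weight_lt (hf : (Function.support f).Finite) (hneg : ∀ i < 0, f i = 0)
    {j : ℤ} (hj : weight f < j) : f j = 0 := by
  by_contra h
  have := mul_apply_le_weight hf hneg j
  have : 1 ≤ (f j : ℤ) := by exact_mod_cast Nat.one_le_iff_ne_zero.mpr h
  nlinarith [weight_nonneg hneg]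

lemma weight_add (hf : (Function.support f).Finite) (hg : (Function.support g).Finite) :
    weight (f + g) = weight f + weight g := by
  simp only [weight, Pi.add_apply, Nat.cast_add, mul_add]
  exact finsum_add_distrib (hf.subset (support_weight_term_subset f))
    (hg.subset (support_weight_term_subset g))

lemma weight_single (j : ℤ) (c : ℕ) : weight (Pi.single j c) = j * c :=
  (finsum_eq_single _ j fun i hi => by simp [hi]).trans (by simp)

lemma finite_setOf_weight_eq (N : ℕ) (n : ℤ) :
    {f : ℤ → ℕ | (Function.support f).Finite ∧ (∀ i < 0, f i = 0) ∧ f 0 ≤ N ∧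
      weight f = n}.Finite := by
  set S := {f : ℤ → ℕ | (Function.support f).Finite ∧ (∀ i < 0, f i = 0) ∧ f 0 ≤ N ∧
      weight f = n}
  let restrict : (ℤ → ℕ) → Set.Icc 0 n → ℕ := fun f i => f i
  have hbound : ∀ f ∈ S, f ≤ fun _ => N + n.toNat := by
    rintro f ⟨hf, hneg, h0, rfl⟩ i
    show f i ≤ N + (weight f).toNat
    rcases lt_trichotomy i 0 with h | rfl | h
    · simp [hneg i h]
    · omega
    · have := apply_le_weight hf hneg h
      omega
  have hout : ∀ f ∈ S, ∀ i ∉ Set.Icc 0 n, f i = 0 := by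
    rintro f ⟨hf, hneg, -, hw⟩ i hi
    rcases lt_or_ge i 0 with h | h
    · exact hneg i h
    · exact apply_eq_zero_of_weight_lt hf hneg (by grind)
  refine Set.Finite.of_finite_image (f := restrict) ?_ ?_
  · refine (Set.Finite.pi (t := fun _ => Set.Iic (N + n.toNat)) fun _ => Set.finite_Iic _).subset ?_
    rintro _ ⟨f, hf, rfl⟩ i -
    exact hbound f hf i
  · intro f hf g hg hfg
    funext i
    by_cases hi : i ∈ Set.Icc 0 n
    · exact congrFun hfg ⟨i, hi⟩
    · rw [hout f hf i hi, hout g hg i hi]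

end Weight

section GeneratingFunction

open PowerSeries

lemma coeff_GF (S : Set (ℤ → ℕ)) (n : ℕ) :
    coeff n (GF S) = ({f | f ∈ S ∧ weight f = n}.ncard : ℚ) := by
  rw [GF, coeff_mk, ← Nat.card_coe_set_eq]
  rfl

lemma GF_union {S T : Set (ℤ → ℕ)} (hST : Disjoint S T)
    (hS : ∀ n : ℤ, {f | f ∈ S ∧ weight f = n}.Finite)
    (hT : ∀ n : ℤ, {f | f ∈ T ∧ weight f = n}.Finite) :
    GF (S ∪ T) = GF S + GF T := by
  ext n
  have hlevel : {f | f ∈ S ∪ T ∧ weight f = n} =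
      {f | f ∈ S ∧ weight f = n} ∪ {f | f ∈ T ∧ weight f = n} := by
    ext f
    simp only [Set.mem_union, Set.mem_ofPred_eq]
    tauto
  have hdisj : Disjoint {f | f ∈ S ∧ weight f = n} {f | f ∈ T ∧ weight f = n} :=
    hST.mono (fun _ hf => hf.1) (fun _ hf => hf.1)
  rw [map_add, coeff_GF, coeff_GF, coeff_GF, hlevel, Set.ncard_union_eq hdisj (hS n) (hT n)]
  push_cast
  rfl

lemma GF_image_of_weight_add_one {S : Set (ℤ → ℕ)} {φ : (ℤ → ℕ) → (ℤ → ℕ)}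
    (hφ : Set.InjOn φ S) (hw : ∀ f ∈ S, weight (φ f) = weight f + 1)
    (hS : ∀ f ∈ S, 0 ≤ weight f) :
    GF (φ '' S) = X * GF S := by
  ext n
  cases n with
  | zero =>
    have hempty : {f | f ∈ φ '' S ∧ weight f = (0 : ℕ)} = ∅ := by
      refine Set.eq_empty_iff_forall_notMem.mpr ?_
      rintro _ ⟨⟨f, hf, rfl⟩, h⟩
      have := hS f hf
      grind
    rw [coeff_zero_X_mul, coeff_GF, hempty, Set.ncard_empty, Nat.cast_zero]
  | succ n =>
    have hlevel : {f | f ∈ φ '' S ∧ weight f = (n + 1 : ℕ)} =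
        φ '' {f | f ∈ S ∧ weight f = n} := by
      ext g
      constructor
      · rintro ⟨⟨f, hf, rfl⟩, h⟩
        exact ⟨f, ⟨hf, by grind⟩, rfl⟩
      · rintro ⟨f, ⟨hf, h⟩, rfl⟩
        exact ⟨⟨f, hf, rfl⟩, by grind⟩
    rw [coeff_succ_X_mul, coeff_GF, coeff_GF, hlevel, (hφ.mono fun _ hf => hf.1).ncard_image]

end GeneratingFunction

structure IsAdmissible (a k : ℕ) (f : ℤ → ℕ) : Prop where
  finite_support : (Function.support f).Finite
  add_succ_le : ∀ i, 0 ≤ i → f i + f (i + 1) ≤ k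
  eq_zero_of_neg : ∀ i < 0, f i = 0
  apply_zero_le : f 0 ≤ 2 * a
  even : ∀ i, Even i → Even (f i)

def headSum (f : ℤ → ℕ) : ℤ := 2 * f 0 + f 1

def ZLe (a k : ℕ) (m : ℤ) : Set (ℤ → ℕ) := {f | IsAdmissible a k f ∧ headSum f ≤ m}

def ZEq (a k : ℕ) (m : ℤ) : Set (ℤ → ℕ) := {f | IsAdmissible a k f ∧ headSum f = m}

section Admissible

variable {a k : ℕ} {f g : ℤ → ℕ}

lemma ZsetE_eq_ZLe (a b k : ℕ) : ZsetE a b k = ZLe a k (k - 2 * b + 2 * a) := by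
  ext f
  exact ⟨fun ⟨h1, h2, h3, h4, h5, h6⟩ => ⟨⟨h1, h2, h3, h4, h6⟩, h5⟩,
    fun ⟨⟨h1, h2, h3, h4, h6⟩, h5⟩ => ⟨h1, h2, h3, h4, h5, h6⟩⟩

lemma ZtilE_eq_ZLe (a b k : ℕ) : ZtilE a b k = ZLe a k (k - 2 * b + 2 * a + 1) := by
  ext f
  exact ⟨fun ⟨h1, h2, h3, h4, h5, h6⟩ => ⟨⟨h1, h2, h3, h4, h6⟩, h5⟩,
    fun ⟨⟨h1, h2, h3, h4, h6⟩, h5⟩ => ⟨h1, h2, h3, h4, h5, h6⟩⟩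

lemma finite_level_of_isAdmissible {S : Set (ℤ → ℕ)} (hS : ∀ f ∈ S, IsAdmissible a k f)
    (n : ℤ) : {f | f ∈ S ∧ weight f = n}.Finite :=
  (finite_setOf_weight_eq (2 * a) n).subset fun f ⟨hf, hw⟩ =>
    ⟨(hS f hf).finite_support, (hS f hf).eq_zero_of_neg, (hS f hf).apply_zero_le, hw⟩

lemma IsAdmissible.of_le (hf : IsAdmissible a k f) (hle : g ≤ f)
    (heven : ∀ i, Even i → g i = f i) : IsAdmissible a k g where
  finite_support := hf.finite_support.subset fun i hi h => hi (Nat.eq_zero_of_le_zero (h ▸ hle i))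
  add_succ_le i hi := (add_le_add (hle i) (hle (i + 1))).trans (hf.add_succ_le i hi)
  eq_zero_of_neg i hi := Nat.eq_zero_of_le_zero (hf.eq_zero_of_neg i hi ▸ hle i)
  apply_zero_le := (hle 0).trans hf.apply_zero_le
  even i hi := heven i hi ▸ hf.even i hi

lemma add_single_one_apply (f : ℤ → ℕ) (i : ℤ) :
    (f + Pi.single 1 1 : ℤ → ℕ) i = if i = 1 then f 1 + 1 else f i := by
  split_ifs with h <;> simp [h]

lemma ne_one_of_even {i : ℤ} (hi : Even i) : i ≠ 1 := by
  rintro rfl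
  exact Int.not_even_one hi

/-- Raising `f₁` keeps `f₀ + f₁ ≤ k` and `f₁ + f₂ ≤ k`: as `f₀` and `f₂` are even, both sums
have the parity of `headSum f`, which is not that of `k`, so neither equals `k`. -/
lemma IsAdmissible.add_single_one (hf : IsAdmissible a k f) (hodd : Odd (headSum f + k)) :
    IsAdmissible a k (f + Pi.single 1 1) where
  finite_support := (hf.finite_support.union (Set.finite_singleton 1)).subset
    ((Function.support_add _ _).trans (Set.union_subset_union_right _ Pi.support_single_subset))
  add_succ_le i hi := by
    obtain ⟨c, hc⟩ := hf.even 0 Even.zero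
    obtain ⟨d, hd⟩ := hf.even 2 even_two
    obtain ⟨e, he⟩ := hodd
    have h0 := hf.add_succ_le 0 le_rfl
    have h1 := hf.add_succ_le 1 zero_le_one
    have hi' := hf.add_succ_le i hi
    simp only [headSum] at he
    simp only [add_single_one_apply]
    split_ifs <;> simp_all <;> omega
  eq_zero_of_neg i hi := by
    rw [add_single_one_apply, if_neg (by omega), hf.eq_zero_of_neg i hi]
  apply_zero_le := by
    rw [add_single_one_apply, if_neg zero_ne_one]
    exact hf.apply_zero_le
  even i hi := by
    rw [add_single_one_apply, if_neg (ne_one_of_even hi)]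
    exact hf.even i hi

end Admissible

section Recursion

open PowerSeries

variable {a k : ℕ} {m : ℤ}

lemma ZLe_add_one_eq_union : ZLe a k (m + 1) = ZLe a k m ∪ ZEq a k (m + 1) := by
  ext f
  simp only [ZLe, ZEq, Set.mem_union, Set.mem_ofPred_eq]
  constructor
  · rintro ⟨hf, hle⟩
    rcases hle.lt_or_eq with hlt | heq
    exacts [Or.inl ⟨hf, by omega⟩, Or.inr ⟨hf, heq⟩]
  · rintro (⟨hf, hle⟩ | ⟨hf, heq⟩)
    exacts [⟨hf, by omega⟩, ⟨hf, heq.le⟩]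

lemma GF_ZLe_add_one : GF (ZLe a k (m + 1)) = GF (ZLe a k m) + GF (ZEq a k (m + 1)) := by
  rw [ZLe_add_one_eq_union]
  refine GF_union ?_ (finite_level_of_isAdmissible fun f hf => hf.1)
    (finite_level_of_isAdmissible fun f hf => hf.1)
  refine Set.disjoint_left.mpr fun f hle heq => ?_
  have := hle.2
  have := heq.2
  omega

/-- Every `f ∈ ZEq a k (m + 1)` has `f₁ ≥ 1` since `2 f₀ ≤ 4a < m + 1`, so lowering `f₁`
by one is a bijection onto `ZEq a k m`. -/
lemma ZEq_add_one_eq_image (hm : Odd (m + k)) (ha : 4 * a < m + 1) :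
    ZEq a k (m + 1) = (· + Pi.single 1 1) '' ZEq a k m := by
  ext f
  constructor
  · rintro ⟨hf, hsum⟩
    have h0 := hf.apply_zero_le
    have h1 : 1 ≤ f 1 := by
      simp only [headSum] at hsum
      omega
    refine ⟨f - Pi.single 1 1, ⟨hf.of_le tsub_le_self fun i hi => ?_, ?_⟩, ?_⟩
    · simp [ne_one_of_even hi]
    · simp only [headSum, Pi.sub_apply, Pi.single_eq_same, Pi.single_eq_of_ne zero_ne_one,
        tsub_zero] at hsum ⊢
      omega
    · funext i
      beta_reduce
      rw [add_single_one_apply]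
      split_ifs with h
      · subst h
        simp only [Pi.sub_apply, Pi.single_eq_same]
        omega
      · simp [h]
  · rintro ⟨g, ⟨hg, hsum⟩, rfl⟩
    refine ⟨hg.add_single_one (hsum ▸ hm), ?_⟩
    simp only [headSum, add_single_one_apply, if_neg zero_ne_one] at hsum ⊢
    push_cast
    omega

lemma GF_ZEq_add_one (hm : Odd (m + k)) (ha : 4 * a < m + 1) :
    GF (ZEq a k (m + 1)) = X * GF (ZEq a k m) := by
  rw [ZEq_add_one_eq_image hm ha]
  refine GF_image_of_weight_add_one (add_left_injective _).injOn (fun f hf => ?_)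
    fun f hf => weight_nonneg hf.1.eq_zero_of_neg
  rw [weight_add hf.1.finite_support ((Set.finite_singleton 1).subset Pi.support_single_subset),
    weight_single]
  simp

end Recursion

/-- `(1 + q) Σ_{f ∈ Z̃^e_{a,b,k}} q^{|f|}
  = Σ_{f ∈ Z^e_{a,b-1,k}} q^{|f|} + q Σ_{f ∈ Z^e_{a,b,k}} q^{|f|}`. -/
theorem stmt11 (a b k : ℕ) (hb : 1 ≤ b) (hk : 2*a + 2*b ≤ k + 1) :
    (1 + PowerSeries.X) * GF (ZtilE a b k)
      = GF (ZsetE a (b-1) k) + PowerSeries.X * GF (ZsetE a b k) := by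
  set m : ℤ := k - 2 * b + 2 * a + 1
  have hZsetE_pred : ZsetE a (b - 1) k = ZLe a k (m + 1) := by
    rw [ZsetE_eq_ZLe]
    congr 1
    omega
  have hZsetE : ZsetE a b k = ZLe a k (m - 1) := by
    rw [ZsetE_eq_ZLe]
    congr 1
    omega
  have hsplit_top := GF_ZLe_add_one (a := a) (k := k) (m := m)
  have hsplit := GF_ZLe_add_one (a := a) (k := k) (m := m - 1)
  rw [sub_add_cancel] at hsplit
  have hshift := GF_ZEq_add_one (a := a) (k := k) (m := m) ⟨k - b + a, by omega⟩ (by omega)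
  rw [ZtilE_eq_ZLe, hZsetE_pred, hZsetE, hsplit_top, hshift, hsplit]
  ring
end

section
/- For non-negative integers a, b, k with 2a + 2b ≤ k and fixed s₁ ≥ ⋯ ≥ s_k ≥ 0 (with s_{k+1} = 0), the generating function for k-tuples of partitions λ = (λ⁽¹⁾,...,λ⁽ᵏ⁾), where λ⁽ᵐ⁾ has exactly s_m - s_{m+1} parts, all parts even, each at least m + max{m - 2a, 0} + max{m - (k - 2b), 0}, equals q^{2(s₁ + s₃ + ⋯ + s_{2a-1}) + 2(s_{2a+1} + s_{2a+2} + ⋯ + s_{k-2b}) + (4s_{k-2b+1} + 2s_{k-2b+2} + 4s_{k-2b+3} + ⋯ + 4s_{k-1} + 2s_k)} / ((q²;q²)_{s₁-s₂} ⋯ (q²;q²)_{s_{k-1}-s_k}(q²;q²)_{s_k}). -/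
/-!
The partition `λ⁽ᵐ⁾` has exactly `n = s_m - s_{m+1}` even parts, each at least `L_m`, that is
at least `2c` with `c = ⌈L_m / 2⌉`. Subtracting `2c` from every part shows that such partitions
have generating function `q^{2cn} G_n`, where `G_n` counts partitions into exactly `n` even parts.
Splitting on whether the smallest part is zero (if not, all parts are at least `2`) gives
`G_{n+1} = G_n + q^{2n+2} G_{n+1}`, hence `G_n = 1 / (q²;q²)_n`. The generating function of the
tuples is the product over `m`, and Abel summation turns the exponent `∑ 2 c_m (s_m - s_{m+1})`
into `∑ (2 c_t - 2 c_{t-1}) s_t`, whose coefficients are `2, 0, 2, 0, …`, then `2, …, 2`, then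
`4, 2, 4, 2, …`.
-/

open PowerSeries Finset

section WeightGF

variable {α β : Type*}

noncomputable def weightGF (w : α → ℕ) : PowerSeries ℚ :=
  PowerSeries.mk fun n => (Nat.card {x // w x = n} : ℚ)

theorem weightGF_congr {w : α → ℕ} {v : β → ℕ} (e : α ≃ β) (h : ∀ x, v (e x) = w x) :
    weightGF w = weightGF v := by
  ext n
  simp only [weightGF, coeff_mk]
  exact congrArg _ (Nat.card_congr (e.subtypeEquiv fun x => by rw [h]))

theorem weightGF_subtype (Q : α → Prop) (w : α → ℕ) :
    weightGF (fun x : {x // Q x} => w x) =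
      PowerSeries.mk fun n => (Nat.card {x // Q x ∧ w x = n} : ℚ) := by
  ext n
  rw [weightGF, coeff_mk, coeff_mk]
  exact congrArg _ (Nat.card_congr (Equiv.subtypeSubtypeEquivSubtypeInter Q (w · = n)))

theorem weightGF_const_zero [Unique α] : weightGF (fun _ : α => 0) = 1 := by
  ext n
  rw [weightGF, coeff_mk, coeff_one]
  split_ifs with hn
  · subst hn
    simp
  · simp [Ne.symm hn]

theorem weightGF_add_const (w : α → ℕ) (d : ℕ) :
    weightGF (fun x => w x + d) = X ^ d * weightGF w := by
  ext n
  rw [coeff_X_pow_mul']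
  simp only [weightGF, coeff_mk]
  split_ifs with h
  · exact congrArg _ (Nat.card_congr (Equiv.subtypeEquivRight fun x => by omega))
  · have : IsEmpty {x // w x + d = n} := ⟨fun x => h (by omega)⟩
    simp

theorem weightGF_sumElim (w : α → ℕ) (v : β → ℕ) (hw : ∀ n, Finite {x // w x = n})
    (hv : ∀ n, Finite {y // v y = n}) :
    weightGF (Sum.elim w v) = weightGF w + weightGF v := by
  ext n
  simp only [weightGF, coeff_mk, map_add, Nat.card_congr Equiv.subtypeSum, Sum.elim_inl,
    Sum.elim_inr, Nat.card_sum, Nat.cast_add]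

def prodFiberEquiv (w : α → ℕ) (v : β → ℕ) (n : ℕ) :
    {p : α × β // w p.1 + v p.2 = n} ≃
      Σ ij : antidiagonal n, {x // w x = ij.1.1} × {y // v y = ij.1.2} where
  toFun p := ⟨⟨(w p.1.1, v p.1.2), mem_antidiagonal.mpr p.2⟩, ⟨p.1.1, rfl⟩, ⟨p.1.2, rfl⟩⟩
  invFun q := ⟨(q.2.1, q.2.2), by rw [q.2.1.2, q.2.2.2]; exact mem_antidiagonal.mp q.1.2⟩
  left_inv _ := rfl
  right_inv := by
    rintro ⟨⟨⟨i, j⟩, hij⟩, ⟨x, hx⟩, ⟨y, hy⟩⟩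
    dsimp only at hx hy
    subst hx hy
    rfl

theorem finite_fiber_prod {w : α → ℕ} {v : β → ℕ} (hw : ∀ n, Finite {x // w x = n})
    (hv : ∀ n, Finite {y // v y = n}) (n : ℕ) :
    Finite {p : α × β // w p.1 + v p.2 = n} :=
  Finite.of_equiv _ (prodFiberEquiv w v n).symm

theorem weightGF_prod (w : α → ℕ) (v : β → ℕ) (hw : ∀ n, Finite {x // w x = n})
    (hv : ∀ n, Finite {y // v y = n}) :
    weightGF (fun p : α × β => w p.1 + v p.2) = weightGF w * weightGF v := by
  ext n
  simp only [weightGF, coeff_mk, coeff_mul, Nat.card_congr (prodFiberEquiv w v n),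
    Nat.card_sigma, Nat.card_prod, Nat.cast_sum, Nat.cast_mul]
  exact sum_coe_sort (antidiagonal n) fun ij =>
    (Nat.card {x // w x = ij.1} : ℚ) * Nat.card {y // v y = ij.2}

end WeightGF

section SupportedTuple

variable {ι β : Type*} [DecidableEq ι] [Zero β] (P : ι → β → Prop)

abbrev SupportedTuple (S : Finset ι) : Type _ :=
  {g : ι → β // (∀ i ∈ S, P i (g i)) ∧ ∀ i ∉ S, g i = 0}

instance : Unique (SupportedTuple P ∅) where
  default := ⟨0, fun _ hi => absurd hi (notMem_empty _), fun _ _ => rfl⟩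
  uniq g := Subtype.ext (funext fun i => g.2.2 i (notMem_empty i))

def SupportedTuple.insertEquiv {a : ι} {S : Finset ι} (ha : a ∉ S) :
    SupportedTuple P (insert a S) ≃ {x // P a x} × SupportedTuple P S where
  toFun g := (⟨g.1 a, g.2.1 a (mem_insert_self a S)⟩,
    ⟨Function.update g.1 a 0,
      fun i hi => by
        rw [Function.update_of_ne (ne_of_mem_of_not_mem hi ha)]
        exact g.2.1 i (mem_insert_of_mem hi),
      fun i hi => by
        by_cases hia : i = a
        · rw [hia, Function.update_self]
        · rw [Function.update_of_ne hia]
          exact g.2.2 i (by simp [hia, hi])⟩)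
  invFun xg := ⟨Function.update xg.2.1 a xg.1.1,
    fun i hi => by
      rcases mem_insert.mp hi with rfl | hi
      · rw [Function.update_self]
        exact xg.1.2
      · rw [Function.update_of_ne (ne_of_mem_of_not_mem hi ha)]
        exact xg.2.2.1 i hi,
    fun i hi => by
      rw [mem_insert, not_or] at hi
      rw [Function.update_of_ne hi.1]
      exact xg.2.2.2 i hi.2⟩
  left_inv g := by
    ext1
    simp
  right_inv := by
    rintro ⟨x, g⟩
    ext1
    · simp
    · ext1
      simp [← g.2.2 a ha]

theorem SupportedTuple.sum_insert {a : ι} {S : Finset ι} (ha : a ∉ S) (w : ι → β → ℕ)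
    (g : SupportedTuple P (insert a S)) :
    ∑ i ∈ insert a S, w i (g.1 i) =
      w a (insertEquiv P ha g).1.1 + ∑ i ∈ S, w i ((insertEquiv P ha g).2.1 i) := by
  rw [Finset.sum_insert ha]
  congr 1
  exact sum_congr rfl fun i hi => by
    simp [insertEquiv, Function.update_of_ne (ne_of_mem_of_not_mem hi ha)]

variable {P} (w : ι → β → ℕ) (hw : ∀ i n, Finite {x : {x // P i x} // w i x = n})
include hw

theorem SupportedTuple.finite_fiber (S : Finset ι) (n : ℕ) :
    Finite {g : SupportedTuple P S // ∑ i ∈ S, w i (g.1 i) = n} := by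
  induction S using Finset.induction_on generalizing n with
  | empty => infer_instance
  | insert a S ha ih =>
    have := finite_fiber_prod (hw a) ih n
    exact Finite.of_equiv _ ((insertEquiv P ha).subtypeEquiv
      (q := fun p => w a p.1 + ∑ i ∈ S, w i (p.2.1 i) = n)
      fun g => by rw [SupportedTuple.sum_insert P ha]).symm

theorem weightGF_supportedTuple (S : Finset ι) :
    weightGF (fun g : SupportedTuple P S => ∑ i ∈ S, w i (g.1 i)) =
      ∏ i ∈ S, weightGF (fun x : {x // P i x} => w i x) := by
  induction S using Finset.induction_on with
  | empty => simpa only [sum_empty, prod_empty] using weightGF_const_zero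
  | insert a S ha ih =>
    rw [prod_insert ha, ← ih, ← weightGF_prod _ _ (hw a) (SupportedTuple.finite_fiber w hw S)]
    exact weightGF_congr (SupportedTuple.insertEquiv P ha)
      fun g => (SupportedTuple.sum_insert P ha w g).symm

end SupportedTuple

section EvenPartition

def IsEvenPartition (c n : ℕ) (f : ℕ → ℕ) : Prop :=
  (∀ p, p + 1 < n → f (p + 1) ≤ f p) ∧ (∀ p < n, Even (f p) ∧ 2 * c ≤ f p) ∧
    ∀ p, n ≤ p → f p = 0

variable {c n : ℕ} {f : ℕ → ℕ}

theorem IsEvenPartition.mono {d : ℕ} (hf : IsEvenPartition d n f) (hcd : c ≤ d) :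
    IsEvenPartition c n f :=
  ⟨hf.1, fun p hp => ⟨(hf.2.1 p hp).1, by have := (hf.2.1 p hp).2; omega⟩, hf.2.2⟩

theorem IsEvenPartition.antitoneOn (hf : IsEvenPartition c n f) : AntitoneOn f (Set.Iio n) := by
  intro p _ q hq hpq
  induction q, hpq using Nat.le_induction with
  | base => exact le_rfl
  | succ q _ ih => exact (hf.1 q hq).trans (ih (by simp only [Set.mem_Iio] at hq ⊢; omega))

theorem IsEvenPartition.le_sum (hf : IsEvenPartition c n f) (p : ℕ) :
    f p ≤ ∑ q ∈ range n, f q := by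
  by_cases hp : p < n
  · exact single_le_sum (fun _ _ => Nat.zero_le _) (mem_range.mpr hp)
  · simp [hf.2.2 p (by omega)]

theorem IsEvenPartition.finite_fiber (c n N : ℕ) :
    Finite {f : {f // IsEvenPartition c n f} // ∑ p ∈ range n, f.1 p = N} := by
  refine Finite.of_injective (β := Fin n → Fin (N + 1))
    (fun f i => ⟨f.1.1 i, Nat.lt_succ_of_le ((f.1.2.le_sum i).trans_eq f.2)⟩) fun f g hfg => ?_
  refine Subtype.ext (Subtype.ext (funext fun p => ?_))
  by_cases hp : p < n
  · exact congrArg Fin.val (congrFun hfg ⟨p, hp⟩)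
  · rw [f.1.2.2.2 p (by omega), g.1.2.2.2 p (by omega)]

theorem IsEvenPartition.sub_two_mul (hf : IsEvenPartition c n f) :
    IsEvenPartition 0 n fun p => f p - 2 * c := by
  refine ⟨fun p hp => Nat.sub_le_sub_right (hf.1 p hp) _, fun p hp => ⟨?_, Nat.zero_le _⟩,
    fun p hp => by simp [hf.2.2 p hp]⟩
  obtain ⟨heven, hle⟩ := hf.2.1 p hp
  exact (Nat.even_sub hle).mpr (iff_of_true heven (even_two_mul c))

theorem IsEvenPartition.add_two_mul (hf : IsEvenPartition 0 n f) (c : ℕ) :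
    IsEvenPartition c n fun p => if p < n then f p + 2 * c else 0 := by
  refine ⟨fun p hp => ?_, fun p hp => ?_, fun p hp => if_neg (by omega)⟩
  · simp only [if_pos hp, if_pos (show p < n by omega)]
    exact Nat.add_le_add_right (hf.1 p hp) _
  · simp only [if_pos hp]
    exact ⟨(hf.2.1 p hp).1.add (even_two_mul c), Nat.le_add_left _ _⟩

def IsEvenPartition.shiftEquiv (c n : ℕ) :
    {f // IsEvenPartition c n f} ≃ {f // IsEvenPartition 0 n f} where
  toFun f := ⟨_, f.2.sub_two_mul⟩
  invFun g := ⟨_, g.2.add_two_mul c⟩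
  left_inv f := by
    ext p
    by_cases hp : p < n
    · have := (f.2.2.1 p hp).2
      simp only [if_pos hp]
      omega
    · simp [hp, f.2.2.2 p (by omega)]
  right_inv g := by
    ext p
    by_cases hp : p < n
    · simp [hp]
    · simp [hp, g.2.2.2 p (by omega)]

theorem IsEvenPartition.sum_eq_sum_sub_add (hf : IsEvenPartition c n f) :
    ∑ p ∈ range n, f p = ∑ p ∈ range n, (f p - 2 * c) + 2 * c * n := by
  rw [sum_tsub_distrib _ fun p hp => (hf.2.1 p (mem_range.mp hp)).2]
  simp only [sum_const, card_range, smul_eq_mul]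
  have : n * (2 * c) ≤ ∑ p ∈ range n, f p := by
    simpa using sum_le_sum fun p hp => (hf.2.1 p (mem_range.mp hp)).2
  rw [mul_comm (2 * c) n]
  omega

theorem IsEvenPartition.of_apply_eq_zero (hf : IsEvenPartition c (n + 1) f) (h : f n = 0) :
    IsEvenPartition c n f := by
  refine ⟨fun p hp => hf.1 p (by omega), fun p hp => hf.2.1 p (by omega), fun p hp => ?_⟩
  rcases hp.eq_or_lt with rfl | hp
  · exact h
  · exact hf.2.2 p hp

theorem IsEvenPartition.succ (hf : IsEvenPartition 0 n f) : IsEvenPartition 0 (n + 1) f := by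
  refine ⟨fun p hp => ?_, fun p hp => ?_, fun p hp => hf.2.2 p (by omega)⟩
  · rcases (Nat.lt_succ_iff.mp hp).lt_or_eq with hp | hp
    · exact hf.1 p hp
    · simp [hf.2.2 (p + 1) hp.ge]
  · rcases (Nat.lt_succ_iff.mp hp).lt_or_eq with hp | rfl
    · exact hf.2.1 p hp
    · simp [hf.2.2 p le_rfl]

theorem IsEvenPartition.of_apply_ne_zero (hf : IsEvenPartition 0 (n + 1) f) (h : f n ≠ 0) :
    IsEvenPartition 1 (n + 1) f := by
  refine ⟨hf.1, fun p hp => ⟨(hf.2.1 p hp).1, ?_⟩, hf.2.2⟩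
  have hlast := hf.antitoneOn hp (Nat.lt_succ_self n) (Nat.lt_succ_iff.mp hp)
  obtain ⟨m, hm⟩ := (hf.2.1 n (Nat.lt_succ_self n)).1
  omega

def IsEvenPartition.splitLastEquiv (n : ℕ) :
    {f // IsEvenPartition 0 (n + 1) f} ≃
      {f // IsEvenPartition 0 n f} ⊕ {f // IsEvenPartition 1 (n + 1) f} where
  toFun f := if h : f.1 n = 0 then .inl ⟨f.1, f.2.of_apply_eq_zero h⟩
    else .inr ⟨f.1, f.2.of_apply_ne_zero h⟩
  invFun := Sum.elim (fun g => ⟨g.1, g.2.succ⟩) fun g => ⟨g.1, g.2.mono (Nat.zero_le 1)⟩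
  left_inv f := by
    by_cases h : f.1 n = 0 <;> simp [h]
  right_inv := by
    rintro (g | g)
    · simp [g.2.2.2 n le_rfl]
    · have := (g.2.2.1 n (Nat.lt_succ_self n)).2
      simp [show g.1 n ≠ 0 by omega]

noncomputable def evenPartitionGF (c n : ℕ) : PowerSeries ℚ :=
  weightGF fun f : {f // IsEvenPartition c n f} => ∑ p ∈ range n, f.1 p

theorem evenPartitionGF_zero_right (c : ℕ) : evenPartitionGF c 0 = 1 := by
  have : Unique {f // IsEvenPartition c 0 f} :=
    ⟨⟨⟨0, by simp [IsEvenPartition]⟩⟩,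
      fun f => Subtype.ext (funext fun p => f.2.2.2 p p.zero_le)⟩
  simpa only [evenPartitionGF, range_zero, sum_empty] using weightGF_const_zero

theorem evenPartitionGF_eq_X_pow_mul (c n : ℕ) :
    evenPartitionGF c n = X ^ (2 * c * n) * evenPartitionGF 0 n := by
  rw [evenPartitionGF, evenPartitionGF, ← weightGF_add_const]
  exact weightGF_congr (IsEvenPartition.shiftEquiv c n) fun f => f.2.sum_eq_sum_sub_add.symm

theorem evenPartitionGF_zero_succ (n : ℕ) :
    evenPartitionGF 0 (n + 1) = evenPartitionGF 0 n + evenPartitionGF 1 (n + 1) := by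
  rw [evenPartitionGF, evenPartitionGF, evenPartitionGF, ← weightGF_sumElim _ _
    (IsEvenPartition.finite_fiber 0 n) (IsEvenPartition.finite_fiber 1 (n + 1))]
  refine weightGF_congr (IsEvenPartition.splitLastEquiv n) fun f => ?_
  by_cases h : f.1 n = 0
  · simp [IsEvenPartition.splitLastEquiv, h, sum_range_succ]
  · simp [IsEvenPartition.splitLastEquiv, h]

theorem evenPartitionGF_mul_poch2 (c n : ℕ) :
    evenPartitionGF c n * poch2 n = X ^ (2 * c * n) := by
  rw [evenPartitionGF_eq_X_pow_mul, mul_assoc]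
  suffices evenPartitionGF 0 n * poch2 n = 1 by rw [this, mul_one]
  induction n with
  | zero => rw [evenPartitionGF_zero_right, poch2, prod_range_zero, mul_one]
  | succ n ih =>
    have hrec := evenPartitionGF_zero_succ n
    rw [evenPartitionGF_eq_X_pow_mul 1 (n + 1)] at hrec
    rw [poch2, prod_range_succ, ← poch2]
    linear_combination (poch2 n) * hrec + ih

theorem constantCoeff_poch2 (n : ℕ) : constantCoeff (poch2 n) = 1 := by
  simp [poch2, map_prod]

theorem evenPartitionGF_eq (c n : ℕ) :
    evenPartitionGF c n = X ^ (2 * c * n) * (poch2 n)⁻¹ := by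
  rw [← evenPartitionGF_mul_poch2, mul_assoc,
    PowerSeries.mul_inv_cancel _ (by simp [constantCoeff_poch2]), mul_one]

end EvenPartition

theorem sum_Icc_mul_sub_succ {R : Type*} [CommRing R] (C σ : ℕ → R) (k : ℕ) :
    ∑ t ∈ Icc 1 k, C t * (σ t - σ (t + 1)) =
      ∑ t ∈ Icc 1 k, (C t - C (t - 1)) * σ t + C 0 * σ 1 - C k * σ (k + 1) := by
  induction k with
  | zero => simp
  | succ k ih =>
    rw [sum_Icc_succ_top (by omega), sum_Icc_succ_top (by omega), ih, Nat.add_sub_cancel]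
    ring

section Exponent

variable {a b k : ℕ}

/-- `⌈L / 2⌉` for the bound `L = m + max(m - 2a, 0) + max(m - (k - 2b), 0)` on the parts
of `λ⁽ᵐ⁾`; truncated subtraction realises the maxima. -/
def halfBound (a b k m : ℕ) : ℕ := (m + (m - 2 * a) + (m - (k - 2 * b)) + 1) / 2

theorem halfBound_zero : halfBound a b k 0 = 0 := by
  simp [halfBound]

theorem le_iff_two_mul_halfBound_le (hb : 2 * b ≤ k) (m : ℕ) {L : ℕ} (hL : Even L) :
    (m : ℤ) + max ((m : ℤ) - 2 * a) 0 + max ((m : ℤ) - ((k : ℤ) - 2 * b)) 0 ≤ L ↔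
      2 * halfBound a b k m ≤ L := by
  rw [Nat.even_iff] at hL
  unfold halfBound
  omega

theorem isEvenPartition_halfBound_iff (hb : 2 * b ≤ k) (m r : ℕ) (f : ℕ → ℕ) :
    IsEvenPartition (halfBound a b k m) r f ↔
      (∀ p, p + 1 < r → f (p + 1) ≤ f p) ∧
      (∀ p < r, Even (f p) ∧
        (m : ℤ) + max ((m : ℤ) - 2 * a) 0 + max ((m : ℤ) - ((k : ℤ) - 2 * b)) 0 ≤ f p) ∧
      ∀ p, r ≤ p → f p = 0 :=
  and_congr_right' <| and_congr_left' <| forall₂_congr fun _ _ =>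
    and_congr_right fun he => (le_iff_two_mul_halfBound_le hb m he).symm

def expCoeff (a b k t : ℕ) : ℕ :=
  if t ≤ 2 * a then (if Odd t then 2 else 0)
  else if t ≤ k - 2 * b then 2
  else if Odd (t - (k - 2 * b)) then 4 else 2

theorem two_mul_halfBound_eq (hab : 2 * a + 2 * b ≤ k) {t : ℕ} (ht : 1 ≤ t) :
    2 * halfBound a b k t = 2 * halfBound a b k (t - 1) + expCoeff a b k t := by
  unfold halfBound expCoeff
  simp only [Nat.odd_iff]
  split_ifs <;> omega

theorem sum_two_mul_halfBound_mul (hab : 2 * a + 2 * b ≤ k) {s : ℕ → ℕ}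
    (hs : ∀ m, 1 ≤ m → m ≤ k → s (m + 1) ≤ s m) (hsk : s (k + 1) = 0) :
    ∑ t ∈ Icc 1 k, 2 * halfBound a b k t * (s t - s (t + 1)) =
      ∑ t ∈ Icc 1 k, expCoeff a b k t * s t := by
  apply Nat.cast_injective (R := ℤ)
  have hcast : ∀ t ∈ Icc 1 k, ((2 * halfBound a b k t * (s t - s (t + 1)) : ℕ) : ℤ) =
      (2 * halfBound a b k t : ℕ) * ((s t : ℤ) - s (t + 1)) := fun t ht => by
    rw [mem_Icc] at ht
    push_cast [hs t ht.1 ht.2]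
    rfl
  rw [Nat.cast_sum, sum_congr rfl hcast, sum_Icc_mul_sub_succ, hsk, Nat.cast_sum]
  simp only [halfBound_zero, mul_zero, Nat.cast_zero, zero_mul, sub_zero, add_zero]
  refine sum_congr rfl fun t ht => ?_
  rw [two_mul_halfBound_eq hab (mem_Icc.mp ht).1]
  push_cast
  ring

theorem sum_expCoeff_mul (hab : 2 * a + 2 * b ≤ k) (s : ℕ → ℕ) :
    ∑ t ∈ Icc 1 k, expCoeff a b k t * s t =
      2 * ∑ t ∈ (Icc 1 (2 * a)).filter (fun t => Odd t), s t
        + 2 * ∑ t ∈ Icc (2 * a + 1) (k - 2 * b), s t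
        + ∑ t ∈ Icc (k - 2 * b + 1) k, (if Odd (t - (k - 2 * b)) then 4 else 2) * s t := by
  have h₁ : 2 * a ≤ k - 2 * b := by omega
  rw [show Icc 1 k = Ioc 0 k from Icc_add_one_left_eq_Ioc 0 k,
    ← sum_Ioc_consecutive _ (Nat.zero_le _) (Nat.sub_le k (2 * b)),
    ← sum_Ioc_consecutive _ (Nat.zero_le _) h₁,
    ← Icc_add_one_left_eq_Ioc 0, ← Icc_add_one_left_eq_Ioc (2 * a),
    ← Icc_add_one_left_eq_Ioc (k - 2 * b), zero_add, sum_filter, mul_sum, mul_sum]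
  congr 1; congr 1
  all_goals refine sum_congr rfl fun t ht => ?_
  all_goals rw [mem_Icc] at ht
  · simp [expCoeff, ht.2]
  · simp [expCoeff, ht.2, show ¬ t ≤ 2 * a by omega]
  · simp [expCoeff, show ¬ t ≤ 2 * a by omega, show ¬ t ≤ k - 2 * b by omega]

end Exponent

theorem stmt12_general (a b k : ℕ) (hab : 2*a + 2*b ≤ k) (s : ℕ → ℕ)
    (hdec : ∀ m, 1 ≤ m → m ≤ k → s (m+1) ≤ s m) (hsk : s (k+1) = 0) :
    PowerSeries.mk (fun n =>
      (Nat.card {lam : ℕ → ℕ → ℕ //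
        (∀ m ∈ Finset.Icc 1 k, ∀ p, p + 1 < s m - s (m+1) → lam m (p+1) ≤ lam m p) ∧
        (∀ m ∈ Finset.Icc 1 k, ∀ p, p < s m - s (m+1) →
          Even (lam m p) ∧
          (m : ℤ) + max ((m : ℤ) - 2*a) 0 + max ((m : ℤ) - ((k : ℤ) - 2*b)) 0 ≤ lam m p) ∧
        (∀ m p, (m ∉ Finset.Icc 1 k ∨ s m - s (m+1) ≤ p) → lam m p = 0) ∧
        (∑ m ∈ Finset.Icc 1 k, ∑ p ∈ Finset.range (s m - s (m+1)), lam m p) = n} : ℚ))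
    = (PowerSeries.X : PowerSeries ℚ) ^
        (2 * ∑ t ∈ (Finset.Icc 1 (2*a)).filter (fun t => Odd t), s t
          + 2 * ∑ t ∈ Finset.Icc (2*a+1) (k-2*b), s t
          + ∑ t ∈ Finset.Icc (k-2*b+1) k, (if Odd (t - (k-2*b)) then 4 else 2) * s t)
      * ∏ t ∈ Finset.Icc 1 k, (poch2 (s t - s (t+1)))⁻¹ := by
  let P : ℕ → (ℕ → ℕ) → Prop := fun m => IsEvenPartition (halfBound a b k m) (s m - s (m + 1))
  let w : ℕ → (ℕ → ℕ) → ℕ := fun m f => ∑ p ∈ range (s m - s (m + 1)), f p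
  calc _ = weightGF fun g : SupportedTuple P (Icc 1 k) => ∑ m ∈ Icc 1 k, w m (g.1 m) := by
        rw [weightGF_subtype _ fun g : ℕ → ℕ → ℕ => ∑ m ∈ Icc 1 k, w m (g m)]
        ext n
        rw [coeff_mk, coeff_mk]
        refine congrArg _ (Nat.card_congr (Equiv.subtypeEquivRight fun lam => ?_))
        rw [← and_assoc, ← and_assoc]
        refine and_congr_left fun _ => ?_
        have hpart := isEvenPartition_halfBound_iff (a := a) (by omega : 2 * b ≤ k)
        constructor
        · rintro ⟨⟨hmono, hbound⟩, hzero⟩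
          exact ⟨fun m hm => (hpart m _ _).mpr
            ⟨hmono m hm, hbound m hm, fun p hp => hzero m p (.inr hp)⟩,
            fun m hm => funext fun p => hzero m p (.inl hm)⟩
        · rintro ⟨hP, hzero⟩
          refine ⟨⟨fun m hm => ((hpart m _ _).mp (hP m hm)).1,
            fun m hm => ((hpart m _ _).mp (hP m hm)).2.1⟩, fun m p hmp => ?_⟩
          by_cases hm : m ∈ Icc 1 k
          · exact ((hpart m _ _).mp (hP m hm)).2.2 p (hmp.resolve_left (not_not.mpr hm))
          · exact congrFun (hzero m hm) p
    _ = ∏ m ∈ Icc 1 k, evenPartitionGF (halfBound a b k m) (s m - s (m + 1)) :=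
        weightGF_supportedTuple w (fun m => IsEvenPartition.finite_fiber _ _) (Icc 1 k)
    _ = _ := by
        simp_rw [evenPartitionGF_eq, prod_mul_distrib, prod_pow_eq_pow_sum,
          sum_two_mul_halfBound_mul hab hdec hsk, sum_expCoeff_mul hab]

/-- For `2a + 2b ≤ k` and fixed `s₁ ≥ ⋯ ≥ s_k ≥ 0` (with `s_{k+1} = 0`), the generating
function for `k`-tuples of partitions `(λ⁽¹⁾,…,λ⁽ᵏ⁾)` — `λ⁽ᵐ⁾` having exactly
`s_m - s_{m+1}` parts, all even, each at least `m + max{m-2a,0} + max{m-(k-2b),0}` —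
equals `q^{2(s₁+s₃+⋯+s_{2a-1}) + 2(s_{2a+1}+⋯+s_{k-2b}) + (4s_{k-2b+1}+2s_{k-2b+2}+⋯+4s_{k-1}+2s_k)}`
divided by `(q²;q²)_{s₁-s₂} ⋯ (q²;q²)_{s_k}`; in the last group the coefficient of `s_t`
is `4` if `t - (k-2b)` is odd and `2` if it is even. -/
theorem stmt12 (a b k : ℕ) (hk : 1 ≤ k) (hab : 2*a + 2*b ≤ k) (s : ℕ → ℕ)
    (hdec : ∀ m, 1 ≤ m → m ≤ k → s (m+1) ≤ s m) (hsk : s (k+1) = 0) :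
    PowerSeries.mk (fun n =>
      (Nat.card {lam : ℕ → ℕ → ℕ //
        (∀ m ∈ Finset.Icc 1 k, ∀ p, p + 1 < s m - s (m+1) → lam m (p+1) ≤ lam m p) ∧
        (∀ m ∈ Finset.Icc 1 k, ∀ p, p < s m - s (m+1) →
          Even (lam m p) ∧
          (m : ℤ) + max ((m : ℤ) - 2*a) 0 + max ((m : ℤ) - ((k : ℤ) - 2*b)) 0 ≤ lam m p) ∧
        (∀ m p, (m ∉ Finset.Icc 1 k ∨ s m - s (m+1) ≤ p) → lam m p = 0) ∧
        (∑ m ∈ Finset.Icc 1 k, ∑ p ∈ Finset.range (s m - s (m+1)), lam m p) = n} : ℚ))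
    = (PowerSeries.X : PowerSeries ℚ) ^
        (2 * ∑ t ∈ (Finset.Icc 1 (2*a)).filter (fun t => Odd t), s t
          + 2 * ∑ t ∈ Finset.Icc (2*a+1) (k-2*b), s t
          + ∑ t ∈ Finset.Icc (k-2*b+1) k, (if Odd (t - (k-2*b)) then 4 else 2) * s t)
      * ∏ t ∈ Finset.Icc 1 k, (poch2 (s t - s (t+1)))⁻¹ :=
  stmt12_general a b k hab s hdec hsk
end

section
/- Let f = (f_i)_{i∈ℤ} be a generalised frequency sequence, u an integer, h ≥ 1 with (f_u, f_{u+1}) = (h,0) and f_i + f_{i+1} ≤ h for all i ≥ u, and let f̄ = ppm_u^{(m)}(f) with final focus at the pair (f̄_v, f̄_{v+1}). Then modulo 2, m ≡ v·f̄_v + (v+1)·f̄_{v+1} + (u)·f_u + (u+1)·f_{u+1} (mod 2); in particular if u is even, then m ≡ v·f̄_v + (v+1)·f̄_{v+1} (mod 2). -/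
def focusWeight (f : ℤ → ℕ) (w : ℤ) : ℤ :=
  w * f w + (w + 1) * f (w + 1)

lemma focusWeight_succ_modEq {f : ℤ → ℕ} {w : ℤ}
    (hcond : f (w + 1) + f (w + 2) = f w + f (w + 1)) :
    focusWeight f (w + 1) ≡ focusWeight f w [ZMOD 2] := by
  have hfw : (f (w + 2) : ℤ) = f w := by omega
  refine (Int.modEq_iff_dvd.mpr ⟨f w, ?_⟩).symm
  rw [focusWeight, focusWeight, show w + 1 + 1 = w + 2 by ring, hfw]
  ring

lemma focusWeight_motion {f : ℤ → ℕ} {w : ℤ} (hpos : 1 ≤ f w) :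
    focusWeight (Function.update (Function.update f w (f w - 1)) (w + 1) (f (w + 1) + 1)) w
      = focusWeight f w + 1 := by
  simp only [focusWeight, Function.update_self,
    Function.update_of_ne (show w ≠ w + 1 by omega)]
  push_cast [hpos]
  ring

lemma PPM.add_focusWeight_modEq {s t : (ℤ → ℕ) × ℤ} {m : ℕ} (hp : PPM s m t) :
    m + focusWeight s.1 s.2 ≡ focusWeight t.1 t.2 [ZMOD 2] := by
  induction hp with
  | zero f w => simp [Int.ModEq]
  | shift _ hcond _ ih => exact ((focusWeight_succ_modEq hcond).symm.add_left _).trans ih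
  | @motion f w m t hcond _ ih =>
    simp only at ih ⊢
    rw [focusWeight_motion (by omega)] at ih
    rwa [Nat.cast_succ, add_right_comm, add_assoc]

theorem stmt19_general (f : ℤ → ℕ) (u : ℤ)
    (m : ℕ) (hfu1 : f (u+1) = 0)
    (fbar : ℤ → ℕ) (v : ℤ) (hppm : PPM (f, u) m (fbar, v)) :
    Int.ModEq 2 (m : ℤ)
      (v * (fbar v : ℤ) + (v+1) * (fbar (v+1) : ℤ)
        + u * (f u : ℤ) + (u+1) * (f (u+1) : ℤ)) ∧
    (Even u → Int.ModEq 2 (m : ℤ) (v * (fbar v : ℤ) + (v+1) * (fbar (v+1) : ℤ))) := by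
  have hp : m + focusWeight f u ≡ focusWeight fbar v [ZMOD 2] := hppm.add_focusWeight_modEq
  have hm : (m : ℤ) ≡ focusWeight fbar v + focusWeight f u [ZMOD 2] :=
    Int.ModEq.add_right_cancel' (focusWeight f u)
      (hp.trans (Int.modEq_iff_dvd.mpr ⟨focusWeight f u, by ring⟩))
  refine ⟨by simpa only [focusWeight, add_assoc] using hm, fun hu => ?_⟩
  have heven : focusWeight f u ≡ 0 [ZMOD 2] := by
    rw [focusWeight, hfu1, Nat.cast_zero, mul_zero, add_zero]
    exact (even_iff_two_dvd.mp (hu.mul_right _)).modEq_zero_int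
  simpa only [focusWeight, add_zero] using hm.trans (heven.add_left _)

/-- Parity of the number of particle motions: if `fbar = ppm_u^{(m)}(f)` with final focus
at `(fbar_v, fbar_{v+1})`, then
`m ≡ v·fbar_v + (v+1)·fbar_{v+1} + u·f_u + (u+1)·f_{u+1} (mod 2)`; in particular,
if `u` is even then `m ≡ v·fbar_v + (v+1)·fbar_{v+1} (mod 2)`. -/
theorem stmt19 (f : ℤ → ℕ) (hfin : (Function.support f).Finite) (u : ℤ)
    (h m : ℕ) (hh : 1 ≤ h) (hfu : f u = h) (hfu1 : f (u+1) = 0)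
    (hbd : ∀ i, u ≤ i → f i + f (i+1) ≤ h)
    (fbar : ℤ → ℕ) (v : ℤ) (hppm : PPM (f, u) m (fbar, v)) :
    Int.ModEq 2 (m : ℤ)
      (v * (fbar v : ℤ) + (v+1) * (fbar (v+1) : ℤ)
        + u * (f u : ℤ) + (u+1) * (f (u+1) : ℤ)) ∧
    (Even u → Int.ModEq 2 (m : ℤ) (v * (fbar v : ℤ) + (v+1) * (fbar (v+1) : ℤ))) :=
  stmt19_general f u m hfu1 fbar v hppm
end
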